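/- arXiv:2601.15388 — 6 statements merged into one kernel-verified Lean document; each statement's English description precedes it below -/
import Mathlib

section
/- Let T be the final-size map built from positive parameters βᵢⱼ, γᵢ, μᵢ and initial data S₁₀, S₂₀ > 0, I₁₀, I₂₀ ≥ 0, R₁₀, R₂₀ ≥ 0 with I₁₀ + I₂₀ > 0, and assume hypothesis H2b: βᵢ₁/μ₁ + βᵢ₂/μ₂ < 1 for i = 1,2. Then T has exactly one fixed point S* in [0,S₁₀]×[0,S₂₀], this fixed point satisfies 0 < Sᵢ* < Sᵢ₀ for i = 1,2, and S* = lim_{n→∞} Tⁿ(0,0). -/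
/-!
In the coordinates `u_j = log ((ε_j x_j + Z_j) / N_j(0))` the map factors as `T = Ψ ∘ L`, where `L`
is this change of coordinates and `Ψ u = (S_i0 exp (∑_j (β_ij / μ_j) u_j))_i`; so `T` is conjugate
to `F = L ∘ Ψ`. Each component of `F` is the monotone, 1-Lipschitz function
`t ↦ log ((c e^t + Z) / N)` applied to a linear form whose positive coefficients sum to less than
one (H2b). Hence `F` is a monotone contraction of `ℝ²` for the sup metric, and its fixed point `u*`
gives the unique fixed point `Ψ u*` of `T` on the nonnegative quadrant, as the limit of the
iterates. Finally `F 0 = L (S₁₀, S₂₀) < 0` because `I₁₀ + I₂₀ > 0`, so monotonicity forces `u* < 0`,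
that is `0 < S*_i < S_i0`.
-/

open Filter

noncomputable def Tmap (β11 β12 β21 β22 μ1 μ2 S10 S20 ε1 ε2 Z1 Z2 N10 N20 : ℝ) :
    ℝ × ℝ → ℝ × ℝ := fun X =>
  (S10 * ((ε1 * X.1 + Z1) / N10) ^ (β11 / μ1) * ((ε2 * X.2 + Z2) / N20) ^ (β12 / μ2),
   S20 * ((ε1 * X.1 + Z1) / N10) ^ (β21 / μ1) * ((ε2 * X.2 + Z2) / N20) ^ (β22 / μ2))

open Function Real Set Topology NNReal

section Conjugate

variable {α β : Type*} [MetricSpace α] [CompleteSpace α] [Nonempty α] {K : ℝ≥0}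
  {Ψ : α → β} {L : β → α} {T : β → β} {s : Set β}

namespace ContractingWith

theorem isFixedPt_map_fixedPoint (hF : ContractingWith K (L ∘ Ψ)) (hΨs : ∀ u, Ψ u ∈ s)
    (hT : EqOn T (Ψ ∘ L) s) : IsFixedPt T (Ψ (fixedPoint (L ∘ Ψ) hF)) := by
  rw [IsFixedPt, hT (hΨs _)]
  exact congrArg Ψ hF.fixedPoint_isFixedPt

theorem eq_map_fixedPoint_of_isFixedPt (hF : ContractingWith K (L ∘ Ψ))
    (hT : EqOn T (Ψ ∘ L) s) {x : β} (hxs : x ∈ s) (hx : IsFixedPt T x) :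
    x = Ψ (fixedPoint (L ∘ Ψ) hF) := by
  have hLx : IsFixedPt (L ∘ Ψ) (L x) := by
    change L ((Ψ ∘ L) x) = L x
    rw [← hT hxs, hx]
  calc x = Ψ (L x) := hx.symm.trans (hT hxs)
    _ = Ψ (fixedPoint (L ∘ Ψ) hF) := congrArg Ψ (hF.fixedPoint_unique hLx)

theorem tendsto_iterate_map_fixedPoint [TopologicalSpace β] (hF : ContractingWith K (L ∘ Ψ))
    (hΨ : Continuous Ψ) (hΨs : ∀ u, Ψ u ∈ s) (hT : EqOn T (Ψ ∘ L) s) {x : β}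
    (hxs : x ∈ s) : Tendsto (fun n => T^[n] x) atTop (𝓝 (Ψ (fixedPoint (L ∘ Ψ) hF))) := by
  have hconj : Semiconj Ψ (L ∘ Ψ) T := fun u => (hT (hΨs u)).symm
  have hiter : (fun n => T^[n + 1] x) = fun n => Ψ ((L ∘ Ψ)^[n] (L x)) := by
    funext n
    rw [iterate_succ_apply, hT hxs, comp_apply, (hconj.iterate_right n).eq]
  rw [← tendsto_add_atTop_iff_nat 1, hiter]
  exact (hΨ.tendsto _).comp (hF.tendsto_iterate_fixedPoint _)

theorem fixedPoint_le_of_map_le [PartialOrder α] [ClosedIicTopology α] {f : α → α}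
    (hf : ContractingWith K f) (hmono : Monotone f) {x : α} (hx : f x ≤ x) :
    fixedPoint f hf ≤ x :=
  le_of_tendsto' (hf.tendsto_iterate_fixedPoint x) fun n =>
    hmono.antitone_iterate_of_map_le hx (Nat.zero_le n)

theorem fixedPoint_lt_of_map_lt [PartialOrder α] [ClosedIicTopology α] {f : α → α}
    (hf : ContractingWith K f) (hmono : Monotone f) {x : α} (hx : f x < x) :
    fixedPoint f hf < x :=
  (hf.fixedPoint_le_of_map_le hmono (hmono hx.le)).trans_lt hx

end ContractingWith

end Conjugate

theorem lipschitzWith_log_mul_exp_add_div {c Z N : ℝ} (hc : 0 ≤ c) (hZ : 0 < Z) (hN : N ≠ 0) :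
    LipschitzWith 1 fun t => log ((c * exp t + Z) / N) := by
  have hderiv (t : ℝ) : HasDerivAt (fun t => log ((c * exp t + Z) / N))
      (c * exp t / (c * exp t + Z)) t := by
    have hpos : 0 < c * exp t + Z := by positivity
    convert ((((hasDerivAt_exp t).const_mul c).add_const Z).div_const N).log
      (div_ne_zero hpos.ne' hN) using 1
    field_simp
  refine lipschitzWith_of_nnnorm_deriv_le (fun t => (hderiv t).differentiableAt) fun t => ?_
  have hpos : 0 < c * exp t + Z := by positivity
  rw [(hderiv t).deriv, ← NNReal.coe_le_coe, coe_nnnorm, Real.norm_eq_abs, NNReal.coe_one,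
    abs_of_nonneg (by positivity), div_le_one hpos]
  linarith

theorem monotone_log_mul_exp_add_div {c Z N : ℝ} (hc : 0 ≤ c) (hZ : 0 < Z) (hN : 0 < N) :
    Monotone fun t => log ((c * exp t + Z) / N) := fun s t hst =>
  log_le_log (by positivity) (by gcongr)

theorem lipschitzWith_mul_fst_add_mul_snd (a b : ℝ) :
    LipschitzWith (‖a‖₊ + ‖b‖₊) fun u : ℝ × ℝ => a * u.1 + b * u.2 := by
  have h := ((lipschitzWith_smul (β := ℝ) a).comp (LipschitzWith.prod_fst (β := ℝ))).add
    ((lipschitzWith_smul (β := ℝ) b).comp (LipschitzWith.prod_snd (α := ℝ)))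
  simpa only [mul_one, comp_apply, smul_eq_mul] using h

theorem monotone_mul_fst_add_mul_snd {a b : ℝ} (ha : 0 ≤ a) (hb : 0 ≤ b) :
    Monotone fun u : ℝ × ℝ => a * u.1 + b * u.2 := fun _ _ h =>
  add_le_add (mul_le_mul_of_nonneg_left h.1 ha) (mul_le_mul_of_nonneg_left h.2 hb)

theorem strictMono_mul_fst_add_mul_snd {a b : ℝ} (ha : 0 < a) (hb : 0 < b) :
    StrictMono fun u : ℝ × ℝ => a * u.1 + b * u.2 := by
  intro u v h
  rcases Prod.lt_iff.1 h with ⟨h₁, h₂⟩ | ⟨h₁, h₂⟩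
  · exact add_lt_add_of_lt_of_le (mul_lt_mul_of_pos_left h₁ ha) (mul_le_mul_of_nonneg_left h₂ hb.le)
  · exact add_lt_add_of_le_of_lt (mul_le_mul_of_nonneg_left h₁ ha.le) (mul_lt_mul_of_pos_left h₂ hb)

namespace FinalSize

variable {a₁₁ a₁₂ a₂₁ a₂₂ S₁ S₂ ε₁ ε₂ Z₁ Z₂ N₁ N₂ : ℝ}

variable (a₁₁ a₁₂ a₂₁ a₂₂ S₁ S₂) in
noncomputable def expCoords (u : ℝ × ℝ) : ℝ × ℝ :=
  (S₁ * exp (a₁₁ * u.1 + a₁₂ * u.2), S₂ * exp (a₂₁ * u.1 + a₂₂ * u.2))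

variable (ε₁ ε₂ Z₁ Z₂ N₁ N₂) in
noncomputable def logCoords (x : ℝ × ℝ) : ℝ × ℝ :=
  (log ((ε₁ * x.1 + Z₁) / N₁), log ((ε₂ * x.2 + Z₂) / N₂))

theorem eqOn_tmap_expCoords_comp_logCoords (β₁₁ β₁₂ β₂₁ β₂₂ μ₁ μ₂ : ℝ) (hε₁ : 0 ≤ ε₁)
    (hε₂ : 0 ≤ ε₂) (hZ₁ : 0 < Z₁) (hZ₂ : 0 < Z₂) (hN₁ : 0 < N₁) (hN₂ : 0 < N₂) :
    EqOn (Tmap β₁₁ β₁₂ β₂₁ β₂₂ μ₁ μ₂ S₁ S₂ ε₁ ε₂ Z₁ Z₂ N₁ N₂)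
      (expCoords (β₁₁ / μ₁) (β₁₂ / μ₂) (β₂₁ / μ₁) (β₂₂ / μ₂) S₁ S₂ ∘
        logCoords ε₁ ε₂ Z₁ Z₂ N₁ N₂) (Ici 0) := by
  intro x hx
  have hx₁ : 0 ≤ x.1 := hx.1
  have hx₂ : 0 ≤ x.2 := hx.2
  have hb₁ : 0 < (ε₁ * x.1 + Z₁) / N₁ := by positivity
  have hb₂ : 0 < (ε₂ * x.2 + Z₂) / N₂ := by positivity
  simp only [Tmap, comp_apply, expCoords, logCoords, rpow_def_of_pos hb₁, rpow_def_of_pos hb₂,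
    mul_assoc, ← exp_add, mul_comm (log _)]

theorem logCoords_expCoords (u : ℝ × ℝ) :
    logCoords ε₁ ε₂ Z₁ Z₂ N₁ N₂ (expCoords a₁₁ a₁₂ a₂₁ a₂₂ S₁ S₂ u) =
      (log ((ε₁ * S₁ * exp (a₁₁ * u.1 + a₁₂ * u.2) + Z₁) / N₁),
       log ((ε₂ * S₂ * exp (a₂₁ * u.1 + a₂₂ * u.2) + Z₂) / N₂)) := by
  simp only [logCoords, expCoords, mul_assoc]

theorem contractingWith_logCoords_comp_expCoords (hε₁ : 0 ≤ ε₁) (hε₂ : 0 ≤ ε₂)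
    (hS₁ : 0 ≤ S₁) (hS₂ : 0 ≤ S₂) (hZ₁ : 0 < Z₁) (hZ₂ : 0 < Z₂) (hN₁ : N₁ ≠ 0) (hN₂ : N₂ ≠ 0)
    (h₁ : |a₁₁| + |a₁₂| < 1) (h₂ : |a₂₁| + |a₂₂| < 1) :
    ContractingWith (max (‖a₁₁‖₊ + ‖a₁₂‖₊) (‖a₂₁‖₊ + ‖a₂₂‖₊))
      (logCoords ε₁ ε₂ Z₁ Z₂ N₁ N₂ ∘ expCoords a₁₁ a₁₂ a₂₁ a₂₂ S₁ S₂) := by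
  refine ⟨max_lt ?_ ?_, ?_⟩
  · simpa [← NNReal.coe_lt_coe] using h₁
  · simpa [← NNReal.coe_lt_coe] using h₂
  have hF₁ := (lipschitzWith_log_mul_exp_add_div (mul_nonneg hε₁ hS₁) hZ₁ hN₁).comp
    (lipschitzWith_mul_fst_add_mul_snd a₁₁ a₁₂)
  have hF₂ := (lipschitzWith_log_mul_exp_add_div (mul_nonneg hε₂ hS₂) hZ₂ hN₂).comp
    (lipschitzWith_mul_fst_add_mul_snd a₂₁ a₂₂)
  rw [one_mul] at hF₁ hF₂
  simpa only [comp_def, logCoords_expCoords] using hF₁.prodMk hF₂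

theorem monotone_logCoords_comp_expCoords (hε₁ : 0 ≤ ε₁) (hε₂ : 0 ≤ ε₂)
    (hS₁ : 0 ≤ S₁) (hS₂ : 0 ≤ S₂) (hZ₁ : 0 < Z₁) (hZ₂ : 0 < Z₂) (hN₁ : 0 < N₁) (hN₂ : 0 < N₂)
    (ha₁₁ : 0 ≤ a₁₁) (ha₁₂ : 0 ≤ a₁₂) (ha₂₁ : 0 ≤ a₂₁) (ha₂₂ : 0 ≤ a₂₂) :
    Monotone (logCoords ε₁ ε₂ Z₁ Z₂ N₁ N₂ ∘ expCoords a₁₁ a₁₂ a₂₁ a₂₂ S₁ S₂) := by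
  have hF₁ := (monotone_log_mul_exp_add_div (mul_nonneg hε₁ hS₁) hZ₁ hN₁).comp
    (monotone_mul_fst_add_mul_snd ha₁₁ ha₁₂)
  have hF₂ := (monotone_log_mul_exp_add_div (mul_nonneg hε₂ hS₂) hZ₂ hN₂).comp
    (monotone_mul_fst_add_mul_snd ha₂₁ ha₂₂)
  simpa only [comp_def, logCoords_expCoords] using hF₁.prodMk hF₂

theorem logCoords_comp_expCoords_zero :
    (logCoords ε₁ ε₂ Z₁ Z₂ N₁ N₂ ∘ expCoords a₁₁ a₁₂ a₂₁ a₂₂ S₁ S₂) 0 =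
      logCoords ε₁ ε₂ Z₁ Z₂ N₁ N₂ (S₁, S₂) := by
  simp [expCoords]

theorem logCoords_neg {x : ℝ × ℝ} (hx₁ : 0 < ε₁ * x.1 + Z₁) (hx₂ : 0 < ε₂ * x.2 + Z₂)
    (hN₁ : 0 < N₁) (hN₂ : 0 < N₂) (hlt : (ε₁ * x.1 + Z₁, ε₂ * x.2 + Z₂) < (N₁, N₂)) :
    logCoords ε₁ ε₂ Z₁ Z₂ N₁ N₂ x < 0 := by
  have hlog_lt {y N : ℝ} (hy : 0 < y) (hN : 0 < N) : log (y / N) < 0 ↔ y < N := by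
    rw [log_neg_iff (by positivity), div_lt_one hN]
  have hlog_le {y N : ℝ} (hy : 0 < y) (hN : 0 < N) : log (y / N) ≤ 0 ↔ y ≤ N := by
    rw [log_nonpos_iff (by positivity), div_le_one hN]
  simp only [Prod.lt_iff, logCoords, Prod.fst_zero, Prod.snd_zero, hlog_lt hx₁ hN₁,
    hlog_lt hx₂ hN₂, hlog_le hx₁ hN₁, hlog_le hx₂ hN₂] at hlt ⊢
  exact hlt

theorem expCoords_nonneg (hS₁ : 0 ≤ S₁) (hS₂ : 0 ≤ S₂) (u : ℝ × ℝ) :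
    0 ≤ expCoords a₁₁ a₁₂ a₂₁ a₂₂ S₁ S₂ u :=
  ⟨by dsimp [expCoords]; positivity, by dsimp [expCoords]; positivity⟩

theorem continuous_expCoords : Continuous (expCoords a₁₁ a₁₂ a₂₁ a₂₂ S₁ S₂) := by
  unfold expCoords
  fun_prop

theorem expCoords_mem_Ioo_of_neg (hS₁ : 0 < S₁) (hS₂ : 0 < S₂) (ha₁₁ : 0 < a₁₁)
    (ha₁₂ : 0 < a₁₂) (ha₂₁ : 0 < a₂₁) (ha₂₂ : 0 < a₂₂) {u : ℝ × ℝ} (hu : u < 0) :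
    (expCoords a₁₁ a₁₂ a₂₁ a₂₂ S₁ S₂ u).1 ∈ Ioo 0 S₁ ∧
      (expCoords a₁₁ a₁₂ a₂₁ a₂₂ S₁ S₂ u).2 ∈ Ioo 0 S₂ := by
  have h₁ := strictMono_mul_fst_add_mul_snd ha₁₁ ha₁₂ hu
  have h₂ := strictMono_mul_fst_add_mul_snd ha₂₁ ha₂₂ hu
  simp only [Prod.fst_zero, Prod.snd_zero, mul_zero, add_zero] at h₁ h₂
  exact ⟨⟨mul_pos hS₁ (exp_pos _), mul_lt_of_lt_one_right hS₁ (exp_lt_one_iff.2 h₁)⟩,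
    ⟨mul_pos hS₂ (exp_pos _), mul_lt_of_lt_one_right hS₂ (exp_lt_one_iff.2 h₂)⟩⟩

theorem initialData_pos {S I R γ μ ε Z N : ℝ} (hS : 0 < S) (hI : 0 ≤ I) (hR : 0 ≤ R)
    (hγ : 0 < γ) (hμ : 0 < μ) (hN : N = S + I + R) (hε : ε = μ / (γ + μ))
    (hZ : Z = (1 - ε) * N + ε * R) : 0 < N ∧ 0 < ε ∧ 0 < Z := by
  have hε₁ : 1 - ε = γ / (γ + μ) := by rw [hε, one_sub_div (by positivity), add_sub_cancel_right]
  subst hN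
  exact ⟨by positivity, hε ▸ by positivity, by rw [hZ, hε₁, hε]; positivity⟩

theorem mul_add_eq_sub_mul {ε S I R N Z : ℝ} (hN : N = S + I + R)
    (hZ : Z = (1 - ε) * N + ε * R) : ε * S + Z = N - ε * I := by
  subst hN hZ
  ring

theorem logCoords_initial_neg {I₁ I₂ R₁ R₂ : ℝ} (hS₁ : 0 ≤ S₁) (hS₂ : 0 ≤ S₂)
    (hI₁ : 0 ≤ I₁) (hI₂ : 0 ≤ I₂) (hI : 0 < I₁ + I₂) (hε₁ : 0 < ε₁) (hε₂ : 0 < ε₂)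
    (hZ₁ : 0 < Z₁) (hZ₂ : 0 < Z₂) (hN₁ : 0 < N₁) (hN₂ : 0 < N₂)
    (hN₁eq : N₁ = S₁ + I₁ + R₁) (hN₂eq : N₂ = S₂ + I₂ + R₂)
    (hZ₁eq : Z₁ = (1 - ε₁) * N₁ + ε₁ * R₁) (hZ₂eq : Z₂ = (1 - ε₂) * N₂ + ε₂ * R₂) :
    logCoords ε₁ ε₂ Z₁ Z₂ N₁ N₂ (S₁, S₂) < 0 := by
  refine logCoords_neg (x := (S₁, S₂)) (by positivity) (by positivity) hN₁ hN₂ ?_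
  simp only [mul_add_eq_sub_mul hN₁eq hZ₁eq, mul_add_eq_sub_mul hN₂eq hZ₂eq, Prod.lt_iff]
  rcases hI₁.lt_or_eq with hI₁ | rfl
  · exact .inl ⟨sub_lt_self _ (mul_pos hε₁ hI₁), sub_le_self _ (mul_nonneg hε₂.le hI₂)⟩
  · exact .inr ⟨sub_le_self _ (by positivity), sub_lt_self _ (mul_pos hε₂ (by linarith))⟩

end FinalSize

open FinalSize

theorem stmt_14
    (β11 β12 β21 β22 γ1 γ2 μ1 μ2 : ℝ)
    (hβ11 : 0 < β11) (hβ12 : 0 < β12) (hβ21 : 0 < β21) (hβ22 : 0 < β22)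
    (hγ1 : 0 < γ1) (hγ2 : 0 < γ2) (hμ1 : 0 < μ1) (hμ2 : 0 < μ2)
    (S10 S20 I10 I20 R10 R20 : ℝ)
    (hS10 : 0 < S10) (hS20 : 0 < S20)
    (hI10 : 0 ≤ I10) (hI20 : 0 ≤ I20)
    (hR10 : 0 ≤ R10) (hR20 : 0 ≤ R20)
    (ε1 ε2 Z1 Z2 N10 N20 : ℝ)
    (hN10 : N10 = S10 + I10 + R10) (hN20 : N20 = S20 + I20 + R20)
    (hε1 : ε1 = μ1 / (γ1 + μ1)) (hε2 : ε2 = μ2 / (γ2 + μ2))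
    (hZ1 : Z1 = (1 - ε1) * N10 + ε1 * R10) (hZ2 : Z2 = (1 - ε2) * N20 + ε2 * R20)
    (hI0 : 0 < I10 + I20)
    (hH2b1 : β11 / μ1 + β12 / μ2 < 1) (hH2b2 : β21 / μ1 + β22 / μ2 < 1)
    (T : ℝ × ℝ → ℝ × ℝ)
    (hT : T = Tmap β11 β12 β21 β22 μ1 μ2 S10 S20 ε1 ε2 Z1 Z2 N10 N20)
    :
    ∃ Sstar : ℝ × ℝ,
      (T Sstar = Sstar ∧
       (0 < Sstar.1 ∧ Sstar.1 < S10) ∧ (0 < Sstar.2 ∧ Sstar.2 < S20) ∧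
       Tendsto (fun n => T^[n] (0, 0)) atTop (nhds Sstar)) ∧
      ∀ Y : ℝ × ℝ, Y.1 ∈ Set.Icc (0:ℝ) S10 → Y.2 ∈ Set.Icc (0:ℝ) S20 → T Y = Y → Y = Sstar := by
  obtain ⟨hN₁, hε₁, hZ₁⟩ := initialData_pos hS10 hI10 hR10 hγ1 hμ1 hN10 hε1 hZ1
  obtain ⟨hN₂, hε₂, hZ₂⟩ := initialData_pos hS20 hI20 hR20 hγ2 hμ2 hN20 hε2 hZ2
  have ha₁₁ := div_pos hβ11 hμ1
  have ha₁₂ := div_pos hβ12 hμ2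
  have ha₂₁ := div_pos hβ21 hμ1
  have ha₂₂ := div_pos hβ22 hμ2
  have hF := contractingWith_logCoords_comp_expCoords hε₁.le hε₂.le hS10.le hS20.le hZ₁ hZ₂
    hN₁.ne' hN₂.ne' (by rwa [abs_of_pos ha₁₁, abs_of_pos ha₁₂] : |β11 / μ1| + |β12 / μ2| < 1)
    (by rwa [abs_of_pos ha₂₁, abs_of_pos ha₂₂] : |β21 / μ1| + |β22 / μ2| < 1)
  have hmono := monotone_logCoords_comp_expCoords hε₁.le hε₂.le hS10.le hS20.le hZ₁ hZ₂ hN₁ hN₂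
    ha₁₁.le ha₁₂.le ha₂₁.le ha₂₂.le
  have hTs := hT ▸ eqOn_tmap_expCoords_comp_logCoords (S₁ := S10) (S₂ := S20) β11 β12 β21 β22
    μ1 μ2 hε₁.le hε₂.le hZ₁ hZ₂ hN₁ hN₂
  have hneg := hF.fixedPoint_lt_of_map_lt hmono (x := 0) <| logCoords_comp_expCoords_zero ▸
    logCoords_initial_neg hS10.le hS20.le hI10 hI20 hI0 hε₁ hε₂ hZ₁ hZ₂ hN₁ hN₂ hN10 hN20 hZ1 hZ2
  obtain ⟨hS₁, hS₂⟩ := expCoords_mem_Ioo_of_neg hS10 hS20 ha₁₁ ha₁₂ ha₂₁ ha₂₂ hneg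
  have hΨs := expCoords_nonneg (a₁₁ := β11 / μ1) (a₁₂ := β12 / μ2) (a₂₁ := β21 / μ1)
    (a₂₂ := β22 / μ2) hS10.le hS20.le
  exact ⟨_, ⟨hF.isFixedPt_map_fixedPoint hΨs hTs, hS₁, hS₂,
    hF.tendsto_iterate_map_fixedPoint continuous_expCoords hΨs hTs (le_refl (0 : ℝ × ℝ))⟩,
    fun Y hY₁ hY₂ hY => hF.eq_map_fixedPoint_of_isFixedPt hTs ⟨hY₁.1, hY₂.1⟩ hY⟩
end

section
/- Let T be the final-size map built from positive parameters βᵢⱼ, γᵢ, μᵢ and initial data S₁₀, S₂₀ > 0, I₁₀, I₂₀ ≥ 0, R₁₀, R₂₀ ≥ 0 with I₁₀ + I₂₀ > 0, and assume hypothesis H2c: βᵢ₁/((γ₁+μ₁)Z₁) + βᵢ₂/((γ₂+μ₂)Z₂) < 1/Sᵢ₀ for i = 1,2. Then T has exactly one fixed point S* in (0,S₁₀]×(0,S₂₀], this fixed point satisfies 0 < Sᵢ* < Sᵢ₀ for i = 1,2, and S* = lim_{n→∞} Tⁿ(0,0). -/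
open Filter

/-!
On the box `[0, S₁₀] × [0, S₂₀]` every base `(εⱼxⱼ + Zⱼ)/Nⱼ(0)` lies in `[Zⱼ/Nⱼ(0), 1]`, so `T` maps
the box into `(0, S₁₀] × (0, S₂₀]`, and by the mean value theorem each factor `uᵖ` is Lipschitz
there with constant `p εⱼ / Zⱼ`. Hence `T` is Lipschitz for the sup metric with constant
`maxᵢ Sᵢ₀ (βᵢ₁/((γ₁+μ₁)Z₁) + βᵢ₂/((γ₂+μ₂)Z₂))`, which is `< 1` by H2c, and Banach's fixed point
theorem gives the unique fixed point and the convergence of `Tⁿ(0,0)`. Since some `Iⱼ₀ > 0`, the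
corresponding base is `< 1` on the whole box, which makes both components of `T` strictly
smaller than `Sᵢ₀`.
-/

open Set Topology

lemma abs_rpow_sub_rpow_le {p z a b : ℝ} (hp : 0 ≤ p) (hz : 0 < z)
    (ha : a ∈ Icc z 1) (hb : b ∈ Icc z 1) : |a ^ p - b ^ p| ≤ p / z * |a - b| := by
  have hderiv : ∀ t ∈ Icc z 1,
      HasDerivWithinAt (fun t => t ^ p) (p * t ^ (p - 1)) (Icc z 1) t := fun t ht =>
    (Real.hasDerivAt_rpow_const (Or.inl (hz.trans_le ht.1).ne')).hasDerivWithinAt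
  have hbound : ∀ t ∈ Icc z 1, ‖p * t ^ (p - 1)‖ ≤ p / z := by
    rintro t ⟨hzt, ht1⟩
    have ht : 0 < t := hz.trans_le hzt
    rw [Real.norm_eq_abs, abs_of_nonneg (by positivity), Real.rpow_sub ht, Real.rpow_one,
      ← mul_div_assoc]
    exact div_le_div₀ hp (mul_le_of_le_one_right hp (Real.rpow_le_one ht.le ht1 hp)) hz hzt
  simpa only [Real.norm_eq_abs] using
    (convex_Icc z 1).norm_image_sub_le_of_norm_hasDerivWithin_le hderiv hbound hb ha

lemma abs_mul_sub_mul_le {a b c d : ℝ} (hb : |b| ≤ 1) (hc : |c| ≤ 1) :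
    |a * c - b * d| ≤ |a - b| + |c - d| :=
  calc |a * c - b * d| = |(a - b) * c + b * (c - d)| := by ring_nf
    _ ≤ |a - b| * |c| + |b| * |c - d| := by
        rw [← abs_mul, ← abs_mul]; exact abs_add_le _ _
    _ ≤ |a - b| * 1 + 1 * |c - d| := by gcongr
    _ = |a - b| + |c - d| := by ring

lemma exists_fixedPoint_of_dist_le {α : Type*} [MetricSpace α] {f : α → α} {s : Set α}
    (hs : IsComplete s) (hf : MapsTo f s s) {K : ℝ} (hK : K < 1)
    (hlip : ∀ x ∈ s, ∀ y ∈ s, dist (f x) (f y) ≤ K * dist x y) {x₀ : α} (hx₀ : x₀ ∈ s) :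
    ∃ y ∈ s, f y = y ∧ Tendsto (fun n => f^[n] x₀) atTop (𝓝 y) ∧
      ∀ z ∈ s, f z = z → z = y := by
  have hcontr : ContractingWith K.toNNReal (hf.restrict f s s) :=
    ⟨Real.toNNReal_lt_one.2 hK, (LipschitzOnWith.of_dist_le_mul fun x hx y hy =>
      (hlip x hx y hy).trans (by gcongr; exact Real.le_coe_toNNReal K)).mapsToRestrict hf⟩
  obtain ⟨y, hy, hfix, htend, -⟩ := hcontr.exists_fixedPoint' hs hf hx₀ (edist_ne_top _ _)
  refine ⟨y, hy, hfix, htend, fun z hz hfz => dist_le_zero.1 ?_⟩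
  have := hlip z hz y hy
  rw [hfz, hfix.eq] at this
  nlinarith [dist_nonneg (x := z) (y := y)]

structure AdmissibleBase (ε Z N S : ℝ) : Prop where
  nonneg : 0 ≤ ε
  pos : 0 < Z
  le : ε * S + Z ≤ N

namespace AdmissibleBase

variable {ε Z N S x y p : ℝ}

lemma N_pos (h : AdmissibleBase ε Z N S) (hS : 0 ≤ S) : 0 < N := by
  nlinarith [h.nonneg, h.pos, h.le]

lemma mem_Icc (h : AdmissibleBase ε Z N S) (hx : x ∈ Icc 0 S) :
    (ε * x + Z) / N ∈ Icc (Z / N) 1 := by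
  have hN := h.N_pos (hx.1.trans hx.2)
  constructor
  · gcongr
    nlinarith [h.nonneg, hx.1]
  · rw [div_le_one hN]; nlinarith [h.nonneg, h.le, hx.2]

lemma rpow_mem_Ioc (h : AdmissibleBase ε Z N S) (hp : 0 ≤ p) (hx : x ∈ Icc 0 S) :
    ((ε * x + Z) / N) ^ p ∈ Ioc 0 1 := by
  obtain ⟨hlow, hup⟩ := h.mem_Icc hx
  have hpos : 0 < (ε * x + Z) / N := (div_pos h.pos (h.N_pos (hx.1.trans hx.2))).trans_le hlow
  exact ⟨Real.rpow_pos_of_pos hpos p, Real.rpow_le_one hpos.le hup hp⟩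

lemma rpow_lt_one (h : AdmissibleBase ε Z N S) (hlt : ε * S + Z < N) (hp : 0 < p)
    (hx : x ∈ Icc 0 S) : ((ε * x + Z) / N) ^ p < 1 := by
  have hN := h.N_pos (hx.1.trans hx.2)
  refine Real.rpow_lt_one (div_nonneg (by nlinarith [h.nonneg, h.pos, hx.1]) hN.le) ?_ hp
  rw [div_lt_one hN]
  nlinarith [h.nonneg, hx.2]

lemma abs_rpow_sub_le (h : AdmissibleBase ε Z N S) (hp : 0 ≤ p) (hx : x ∈ Icc 0 S)
    (hy : y ∈ Icc 0 S) :
    |((ε * x + Z) / N) ^ p - ((ε * y + Z) / N) ^ p| ≤ p * ε / Z * |x - y| := by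
  have hN := h.N_pos (hx.1.trans hx.2)
  calc _ ≤ p / (Z / N) * |(ε * x + Z) / N - (ε * y + Z) / N| :=
        abs_rpow_sub_rpow_le hp (div_pos h.pos hN) (h.mem_Icc hx) (h.mem_Icc hy)
    _ = p / (Z / N) * (ε / N * |x - y|) := by
        rw [← sub_div, add_sub_add_right_eq_sub, ← mul_sub, mul_div_right_comm, abs_mul,
          abs_of_nonneg (div_nonneg h.nonneg hN.le)]
    _ = p * ε / Z * |x - y| := by field_simp

end AdmissibleBase

lemma abs_mul_rpow_mul_rpow_sub_le {ε1 ε2 Z1 Z2 N1 N2 S1 S2 S p q : ℝ}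
    (h1 : AdmissibleBase ε1 Z1 N1 S1) (h2 : AdmissibleBase ε2 Z2 N2 S2) (hS : 0 ≤ S)
    (hp : 0 ≤ p) (hq : 0 ≤ q) {X Y : ℝ × ℝ} (hX : X ∈ Icc 0 S1 ×ˢ Icc 0 S2)
    (hY : Y ∈ Icc 0 S1 ×ˢ Icc 0 S2) :
    |S * ((ε1 * X.1 + Z1) / N1) ^ p * ((ε2 * X.2 + Z2) / N2) ^ q -
        S * ((ε1 * Y.1 + Z1) / N1) ^ p * ((ε2 * Y.2 + Z2) / N2) ^ q| ≤
      S * (p * ε1 / Z1 + q * ε2 / Z2) * dist X Y := by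
  have hb := h1.rpow_mem_Ioc hp hY.1
  have hc := h2.rpow_mem_Ioc hq hX.2
  have hprod := abs_mul_sub_mul_le (abs_le.2 ⟨by linarith [hb.1], hb.2⟩)
    (abs_le.2 ⟨by linarith [hc.1], hc.2⟩) (a := ((ε1 * X.1 + Z1) / N1) ^ p)
    (d := ((ε2 * Y.2 + Z2) / N2) ^ q)
  have hdist1 : |X.1 - Y.1| ≤ dist X Y := by
    rw [Prod.dist_eq, ← Real.dist_eq]; exact le_max_left _ _
  have hdist2 : |X.2 - Y.2| ≤ dist X Y := by
    rw [Prod.dist_eq, ← Real.dist_eq]; exact le_max_right _ _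
  have hL1 : 0 ≤ p * ε1 / Z1 := div_nonneg (mul_nonneg hp h1.nonneg) h1.pos.le
  have hL2 : 0 ≤ q * ε2 / Z2 := div_nonneg (mul_nonneg hq h2.nonneg) h2.pos.le
  rw [mul_assoc, mul_assoc, ← mul_sub, abs_mul, abs_of_nonneg hS, mul_assoc]
  gcongr
  calc _ ≤ _ := hprod
    _ ≤ p * ε1 / Z1 * |X.1 - Y.1| + q * ε2 / Z2 * |X.2 - Y.2| :=
        add_le_add (h1.abs_rpow_sub_le hp hX.1 hY.1) (h2.abs_rpow_sub_le hq hX.2 hY.2)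
    _ ≤ p * ε1 / Z1 * dist X Y + q * ε2 / Z2 * dist X Y := by gcongr
    _ = _ := by ring

section Tmap

variable {β11 β12 β21 β22 μ1 μ2 S10 S20 ε1 ε2 Z1 Z2 N10 N20 : ℝ}

lemma Tmap_mapsTo (h1 : AdmissibleBase ε1 Z1 N10 S10) (h2 : AdmissibleBase ε2 Z2 N20 S20)
    (hS10 : 0 < S10) (hS20 : 0 < S20) (hp11 : 0 ≤ β11 / μ1) (hp12 : 0 ≤ β12 / μ2)
    (hp21 : 0 ≤ β21 / μ1) (hp22 : 0 ≤ β22 / μ2) :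
    MapsTo (Tmap β11 β12 β21 β22 μ1 μ2 S10 S20 ε1 ε2 Z1 Z2 N10 N20)
      (Icc 0 S10 ×ˢ Icc 0 S20) (Ioc 0 S10 ×ˢ Ioc 0 S20) := by
  intro X hX
  have hmem : ∀ {S a b : ℝ}, 0 < S → a ∈ Ioc 0 1 → b ∈ Ioc 0 1 → S * a * b ∈ Ioc 0 S :=
    fun {S a b} hS ⟨ha0, ha1⟩ ⟨hb0, hb1⟩ => ⟨by positivity,
      (mul_le_of_le_one_right (by positivity) hb1).trans (mul_le_of_le_one_right hS.le ha1)⟩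
  exact ⟨hmem hS10 (h1.rpow_mem_Ioc hp11 hX.1) (h2.rpow_mem_Ioc hp12 hX.2),
    hmem hS20 (h1.rpow_mem_Ioc hp21 hX.1) (h2.rpow_mem_Ioc hp22 hX.2)⟩

lemma Tmap_lt (h1 : AdmissibleBase ε1 Z1 N10 S10) (h2 : AdmissibleBase ε2 Z2 N20 S20)
    (hS10 : 0 < S10) (hS20 : 0 < S20) (hlt : ε1 * S10 + Z1 < N10 ∨ ε2 * S20 + Z2 < N20)
    (hp11 : 0 < β11 / μ1) (hp12 : 0 < β12 / μ2) (hp21 : 0 < β21 / μ1) (hp22 : 0 < β22 / μ2)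
    {X : ℝ × ℝ} (hX : X ∈ Icc 0 S10 ×ˢ Icc 0 S20) :
    (Tmap β11 β12 β21 β22 μ1 μ2 S10 S20 ε1 ε2 Z1 Z2 N10 N20 X).1 < S10 ∧
      (Tmap β11 β12 β21 β22 μ1 μ2 S10 S20 ε1 ε2 Z1 Z2 N10 N20 X).2 < S20 := by
  have hlt_one : ∀ {S p q : ℝ}, 0 < S → 0 < p → 0 < q →
      S * ((ε1 * X.1 + Z1) / N10) ^ p * ((ε2 * X.2 + Z2) / N20) ^ q < S := by
    intro S p q hS hp hq
    obtain ⟨ha0, ha1⟩ := h1.rpow_mem_Ioc hp.le hX.1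
    obtain ⟨hb0, hb1⟩ := h2.rpow_mem_Ioc hq.le hX.2
    rw [mul_assoc]
    refine mul_lt_of_lt_one_right hS ?_
    rcases hlt with hlt | hlt
    · exact mul_lt_one_of_nonneg_of_lt_one_left ha0.le (h1.rpow_lt_one hlt hp hX.1) hb1
    · exact mul_lt_one_of_nonneg_of_lt_one_right ha1 hb0.le (h2.rpow_lt_one hlt hq hX.2)
  exact ⟨hlt_one hS10 hp11 hp12, hlt_one hS20 hp21 hp22⟩

lemma dist_Tmap_le (h1 : AdmissibleBase ε1 Z1 N10 S10) (h2 : AdmissibleBase ε2 Z2 N20 S20)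
    (hS10 : 0 ≤ S10) (hS20 : 0 ≤ S20) (hp11 : 0 ≤ β11 / μ1) (hp12 : 0 ≤ β12 / μ2)
    (hp21 : 0 ≤ β21 / μ1) (hp22 : 0 ≤ β22 / μ2) {X Y : ℝ × ℝ}
    (hX : X ∈ Icc 0 S10 ×ˢ Icc 0 S20) (hY : Y ∈ Icc 0 S10 ×ˢ Icc 0 S20) :
    dist (Tmap β11 β12 β21 β22 μ1 μ2 S10 S20 ε1 ε2 Z1 Z2 N10 N20 X)
        (Tmap β11 β12 β21 β22 μ1 μ2 S10 S20 ε1 ε2 Z1 Z2 N10 N20 Y) ≤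
      max (S10 * (β11 / μ1 * ε1 / Z1 + β12 / μ2 * ε2 / Z2))
        (S20 * (β21 / μ1 * ε1 / Z1 + β22 / μ2 * ε2 / Z2)) * dist X Y := by
  rw [Prod.dist_eq, Real.dist_eq, Real.dist_eq, max_mul_of_nonneg _ _ dist_nonneg]
  exact max_le_max (abs_mul_rpow_mul_rpow_sub_le h1 h2 hS10 hp11 hp12 hX hY)
    (abs_mul_rpow_mul_rpow_sub_le h1 h2 hS20 hp21 hp22 hX hY)

end Tmap

lemma mul_add_eq_of_initialData {S0 I0 R0 ε Z N : ℝ} (hN : N = S0 + I0 + R0)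
    (hZ : Z = (1 - ε) * N + ε * R0) : ε * S0 + Z = N - ε * I0 := by
  subst hZ hN; ring

lemma admissibleBase_of_initialData {γ μ S0 I0 R0 ε Z N : ℝ} (hγ : 0 < γ) (hμ : 0 < μ)
    (hS0 : 0 < S0) (hI0 : 0 ≤ I0) (hR0 : 0 ≤ R0) (hN : N = S0 + I0 + R0)
    (hε : ε = μ / (γ + μ)) (hZ : Z = (1 - ε) * N + ε * R0) : AdmissibleBase ε Z N S0 := by
  have hε0 : 0 ≤ ε := hε ▸ by positivity
  have hε1 : 0 < 1 - ε := by rw [hε, sub_pos, div_lt_one (by positivity)]; linarith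
  refine ⟨hε0, ?_, ?_⟩
  · rw [hZ]
    exact add_pos_of_pos_of_nonneg (mul_pos hε1 (by linarith)) (mul_nonneg hε0 hR0)
  · rw [mul_add_eq_of_initialData hN hZ]
    linarith [mul_nonneg hε0 hI0]

lemma mul_add_lt_of_initialData {γ μ S0 I0 R0 ε Z N : ℝ} (hγ : 0 < γ) (hμ : 0 < μ)
    (hI0 : 0 < I0) (hN : N = S0 + I0 + R0) (hε : ε = μ / (γ + μ))
    (hZ : Z = (1 - ε) * N + ε * R0) : ε * S0 + Z < N := by
  have hε0 : 0 < ε := hε ▸ by positivity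
  rw [mul_add_eq_of_initialData hN hZ]
  linarith [mul_pos hε0 hI0]

theorem stmt_15
    (β11 β12 β21 β22 γ1 γ2 μ1 μ2 : ℝ)
    (hβ11 : 0 < β11) (hβ12 : 0 < β12) (hβ21 : 0 < β21) (hβ22 : 0 < β22)
    (hγ1 : 0 < γ1) (hγ2 : 0 < γ2) (hμ1 : 0 < μ1) (hμ2 : 0 < μ2)
    (S10 S20 I10 I20 R10 R20 : ℝ)
    (hS10 : 0 < S10) (hS20 : 0 < S20)
    (hI10 : 0 ≤ I10) (hI20 : 0 ≤ I20)
    (hR10 : 0 ≤ R10) (hR20 : 0 ≤ R20)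
    (ε1 ε2 Z1 Z2 N10 N20 : ℝ)
    (hN10 : N10 = S10 + I10 + R10) (hN20 : N20 = S20 + I20 + R20)
    (hε1 : ε1 = μ1 / (γ1 + μ1)) (hε2 : ε2 = μ2 / (γ2 + μ2))
    (hZ1 : Z1 = (1 - ε1) * N10 + ε1 * R10) (hZ2 : Z2 = (1 - ε2) * N20 + ε2 * R20)
    (hI0 : 0 < I10 + I20)
    (hH2c1 : β11 / ((γ1 + μ1) * Z1) + β12 / ((γ2 + μ2) * Z2) < 1 / S10)
    (hH2c2 : β21 / ((γ1 + μ1) * Z1) + β22 / ((γ2 + μ2) * Z2) < 1 / S20)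
    (T : ℝ × ℝ → ℝ × ℝ)
    (hT : T = Tmap β11 β12 β21 β22 μ1 μ2 S10 S20 ε1 ε2 Z1 Z2 N10 N20)
    :
    ∃ Sstar : ℝ × ℝ,
      (T Sstar = Sstar ∧
       (0 < Sstar.1 ∧ Sstar.1 < S10) ∧ (0 < Sstar.2 ∧ Sstar.2 < S20) ∧
       Tendsto (fun n => T^[n] (0, 0)) atTop (nhds Sstar)) ∧
      ∀ Y : ℝ × ℝ, Y.1 ∈ Set.Ioc (0:ℝ) S10 → Y.2 ∈ Set.Ioc (0:ℝ) S20 → T Y = Y → Y = Sstar := by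
  subst hT
  have h1 := admissibleBase_of_initialData hγ1 hμ1 hS10 hI10 hR10 hN10 hε1 hZ1
  have h2 := admissibleBase_of_initialData hγ2 hμ2 hS20 hI20 hR20 hN20 hε2 hZ2
  have hlt : ε1 * S10 + Z1 < N10 ∨ ε2 * S20 + Z2 < N20 :=
    (lt_or_ge 0 I10).imp (mul_add_lt_of_initialData hγ1 hμ1 · hN10 hε1 hZ1)
      fun h => mul_add_lt_of_initialData hγ2 hμ2 (by linarith) hN20 hε2 hZ2
  have hp11 : 0 < β11 / μ1 := div_pos hβ11 hμ1
  have hp12 : 0 < β12 / μ2 := div_pos hβ12 hμ2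
  have hp21 : 0 < β21 / μ1 := div_pos hβ21 hμ1
  have hp22 : 0 < β22 / μ2 := div_pos hβ22 hμ2
  have hrate1 : ∀ β, β / μ1 * ε1 / Z1 = β / ((γ1 + μ1) * Z1) := fun β => by
    rw [hε1]; field_simp
  have hrate2 : ∀ β, β / μ2 * ε2 / Z2 = β / ((γ2 + μ2) * Z2) := fun β => by
    rw [hε2]; field_simp
  have hK : max (S10 * (β11 / μ1 * ε1 / Z1 + β12 / μ2 * ε2 / Z2))
      (S20 * (β21 / μ1 * ε1 / Z1 + β22 / μ2 * ε2 / Z2)) < 1 := by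
    simp only [hrate1, hrate2]
    exact max_lt ((lt_div_iff₀' hS10).1 hH2c1) ((lt_div_iff₀' hS20).1 hH2c2)
  have hinto := Tmap_mapsTo h1 h2 hS10 hS20 hp11.le hp12.le hp21.le hp22.le
  have hmaps := hinto.mono_right (prod_mono Ioc_subset_Icc_self Ioc_subset_Icc_self)
  have hzero : ((0 : ℝ), (0 : ℝ)) ∈ Icc 0 S10 ×ˢ Icc 0 S20 :=
    ⟨⟨le_rfl, hS10.le⟩, ⟨le_rfl, hS20.le⟩⟩
  obtain ⟨y, hy, hfix, htend, huniq⟩ := exists_fixedPoint_of_dist_le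
    (isClosed_Icc.prod isClosed_Icc).isComplete hmaps hK
    (fun X hX Y hY => dist_Tmap_le h1 h2 hS10.le hS20.le hp11.le hp12.le hp21.le hp22.le hX hY)
    hzero
  have hpos := hinto hy
  have hlt_S := Tmap_lt h1 h2 hS10 hS20 hlt hp11 hp12 hp21 hp22 hy
  rw [hfix] at hpos hlt_S
  exact ⟨y, ⟨hfix, ⟨hpos.1.1, hlt_S.1⟩, ⟨hpos.2.1, hlt_S.2⟩, htend⟩,
    fun Y hY1 hY2 => huniq Y ⟨Ioc_subset_Icc_self hY1, Ioc_subset_Icc_self hY2⟩⟩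
end

section
/- Let T be the final-size map built from positive parameters βᵢⱼ, γᵢ, μᵢ and initial data S₁₀, S₂₀ > 0, I₁₀, I₂₀ ≥ 0, R₁₀, R₂₀ ≥ 0, and assume hypothesis H2d: Λ := max over i ∈ {1,2} of (βᵢ₁ S₁₀/((γ₁+μ₁)Z₁) + βᵢ₂ S₂₀/((γ₂+μ₂)Z₂)) < 1. Define Ω = (−∞, log S₁₀] × (−∞, log S₂₀] and G : Ω → ℝ² by Gᵢ(u₁,u₂) = log Tᵢ(e^{u₁}, e^{u₂}). Then G maps Ω into Ω and is a Λ-contraction in the supremum norm: for all U, V ∈ Ω, max_i |Gᵢ(U) − Gᵢ(V)| ≤ Λ · max_j |uⱼ − vⱼ|. -/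
open Filter

noncomputable def Gmap (T : ℝ × ℝ → ℝ × ℝ) : ℝ × ℝ → ℝ × ℝ := fun u =>
  (Real.log (T (Real.exp u.1, Real.exp u.2)).1, Real.log (T (Real.exp u.1, Real.exp u.2)).2)

/-! In logarithmic coordinates each component of `T` is `log Sᵢ₀ + ∑ⱼ (βᵢⱼ/μⱼ) log φⱼ(uⱼ)` with
`φⱼ(a) = (εⱼ eᵃ + Zⱼ)/Nⱼ(0)`. On `a ≤ log Sⱼ₀` one has `Zⱼ ≤ εⱼ eᵃ + Zⱼ ≤ Nⱼ(0)`, so `φⱼ ≤ 1`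
(hence `G` maps `Ω` into `Ω`), and `log φⱼ` is Lipschitz with constant `εⱼ Sⱼ₀ / Zⱼ`, since `exp` is
`Sⱼ₀`-Lipschitz there and `log` is `1/Zⱼ`-Lipschitz on `[Zⱼ, ∞)`. Summing over `j` gives row
constants `βᵢ₁/μ₁ · ε₁S₁₀/Z₁ + βᵢ₂/μ₂ · ε₂S₂₀/Z₂ = βᵢ₁S₁₀/((γ₁+μ₁)Z₁) + βᵢ₂S₂₀/((γ₂+μ₂)Z₂) ≤ Λ`. -/

open Real

lemma exp_sub_exp_le_exp_mul_sub (a b : ℝ) : exp a - exp b ≤ exp a * (a - b) := by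
  have htangent := add_one_le_exp (b - a)
  have hsplit : exp b = exp a * exp (b - a) := by rw [← exp_add]; ring_nf
  nlinarith [exp_pos a]

lemma abs_exp_sub_exp_le {a b c : ℝ} (ha : a ≤ c) (hb : b ≤ c) :
    |exp a - exp b| ≤ exp c * |a - b| := by
  wlog hba : b ≤ a generalizing a b
  · rw [abs_sub_comm, abs_sub_comm a]
    exact this hb ha (le_of_not_ge hba)
  rw [abs_of_nonneg (sub_nonneg.2 (exp_le_exp.2 hba)), abs_of_nonneg (sub_nonneg.2 hba)]
  calc exp a - exp b ≤ exp a * (a - b) := exp_sub_exp_le_exp_mul_sub a b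
    _ ≤ exp c * (a - b) := by gcongr

lemma log_sub_log_le_sub_div {x y : ℝ} (hx : 0 < x) (hy : 0 < y) :
    log x - log y ≤ (x - y) / y := by
  calc log x - log y = log (x / y) := (log_div hx.ne' hy.ne').symm
    _ ≤ x / y - 1 := log_le_sub_one_of_pos (div_pos hx hy)
    _ = (x - y) / y := by field_simp

lemma abs_log_sub_log_le {m x y : ℝ} (hm : 0 < m) (hx : m ≤ x) (hy : m ≤ y) :
    |log x - log y| ≤ |x - y| / m := by
  wlog hyx : y ≤ x generalizing x y
  · rw [abs_sub_comm, abs_sub_comm x]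
    exact this hy hx (le_of_not_ge hyx)
  have hy0 : 0 < y := hm.trans_le hy
  rw [abs_of_nonneg (sub_nonneg.2 (log_le_log hy0 hyx)), abs_of_nonneg (sub_nonneg.2 hyx)]
  calc log x - log y ≤ (x - y) / y := log_sub_log_le_sub_div (hy0.trans_le hyx) hy0
    _ ≤ (x - y) / m := by gcongr

lemma abs_log_mul_exp_add_sub_le {ε Z S a b : ℝ} (hε : 0 ≤ ε) (hZ : 0 < Z) (hS : 0 < S)
    (ha : a ≤ log S) (hb : b ≤ log S) :
    |log (ε * exp a + Z) - log (ε * exp b + Z)| ≤ ε * S / Z * |a - b| := by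
  have hle : ∀ t, Z ≤ ε * exp t + Z := fun t => le_add_of_nonneg_left (by positivity)
  calc |log (ε * exp a + Z) - log (ε * exp b + Z)|
      ≤ |ε * exp a + Z - (ε * exp b + Z)| / Z := abs_log_sub_log_le hZ (hle a) (hle b)
    _ = ε * |exp a - exp b| / Z := by
        rw [add_sub_add_right_eq_sub, ← mul_sub, abs_mul, abs_of_nonneg hε]
    _ ≤ ε * (S * |a - b|) / Z := by
        gcongr
        simpa only [exp_log hS] using abs_exp_sub_exp_le ha hb
    _ = ε * S / Z * |a - b| := by ring

lemma log_mul_rpow_mul_rpow {S x y : ℝ} (p q : ℝ) (hS : 0 < S) (hx : 0 < x) (hy : 0 < y) :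
    log (S * x ^ p * y ^ q) = log S + p * log x + q * log y := by
  rw [log_mul (by positivity) (by positivity), log_mul hS.ne' (by positivity),
    log_rpow hx, log_rpow hy]

lemma log_mul_rpow_mul_rpow_le_log {S x y p q : ℝ} (hS : 0 < S) (hx : 0 < x) (hy : 0 < y)
    (hx1 : x ≤ 1) (hy1 : y ≤ 1) (hp : 0 ≤ p) (hq : 0 ≤ q) :
    log (S * x ^ p * y ^ q) ≤ log S := by
  rw [log_mul_rpow_mul_rpow p q hS hx hy]
  nlinarith [log_nonpos hx.le hx1, log_nonpos hy.le hy1]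

lemma abs_log_mul_rpow_mul_rpow_sub_le {S p q c₁ c₂ d₁ d₂ x₁ x₂ y₁ y₂ : ℝ} (hS : 0 < S)
    (hp : 0 ≤ p) (hq : 0 ≤ q) (hc₁ : 0 ≤ c₁) (hc₂ : 0 ≤ c₂)
    (hx₁ : 0 < x₁) (hx₂ : 0 < x₂) (hy₁ : 0 < y₁) (hy₂ : 0 < y₂)
    (h₁ : |log x₁ - log y₁| ≤ c₁ * d₁) (h₂ : |log x₂ - log y₂| ≤ c₂ * d₂) :
    |log (S * x₁ ^ p * x₂ ^ q) - log (S * y₁ ^ p * y₂ ^ q)|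
      ≤ (p * c₁ + q * c₂) * max d₁ d₂ := by
  rw [log_mul_rpow_mul_rpow p q hS hx₁ hx₂, log_mul_rpow_mul_rpow p q hS hy₁ hy₂]
  calc |log S + p * log x₁ + q * log x₂ - (log S + p * log y₁ + q * log y₂)|
      = |p * (log x₁ - log y₁) + q * (log x₂ - log y₂)| := by ring_nf
    _ ≤ p * |log x₁ - log y₁| + q * |log x₂ - log y₂| := by
        refine (abs_add_le _ _).trans_eq ?_
        rw [abs_mul, abs_mul, abs_of_nonneg hp, abs_of_nonneg hq]
    _ ≤ p * (c₁ * max d₁ d₂) + q * (c₂ * max d₁ d₂) := by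
        gcongr
        · exact h₁.trans (by gcongr; exact le_max_left _ _)
        · exact h₂.trans (by gcongr; exact le_max_right _ _)
    _ = (p * c₁ + q * c₂) * max d₁ d₂ := by ring

lemma div_add_mem_Ioo {γ μ : ℝ} (hγ : 0 < γ) (hμ : 0 < μ) : μ / (γ + μ) ∈ Set.Ioo 0 1 :=
  ⟨by positivity, (div_lt_one (by positivity)).2 (by linarith)⟩

section FinalSizeFactor

variable {S I R ε Z N : ℝ}

lemma finalSize_Z_pos (hS : 0 < S) (hI : 0 ≤ I) (hR : 0 ≤ R) (hε : ε < 1)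
    (hN : N = S + I + R) (hZ : Z = (1 - ε) * N + ε * R) : 0 < Z := by
  rw [hZ, hN]
  nlinarith

lemma finalSize_factor_pos (hS : 0 < S) (hI : 0 ≤ I) (hR : 0 ≤ R) (hε : ε ∈ Set.Ioo 0 1)
    (hN : N = S + I + R) (hZ : Z = (1 - ε) * N + ε * R) (a : ℝ) :
    0 < (ε * exp a + Z) / N := by
  have hZ0 := finalSize_Z_pos hS hI hR hε.2 hN hZ
  have hε0 := hε.1
  have hN0 : 0 < N := by rw [hN]; positivity
  positivity

lemma finalSize_factor_le_one (hS : 0 < S) (hI : 0 ≤ I) (hR : 0 ≤ R) (hε : 0 ≤ ε)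
    (hN : N = S + I + R) (hZ : Z = (1 - ε) * N + ε * R) (a : ℝ) (ha : a ≤ log S) :
    (ε * exp a + Z) / N ≤ 1 := by
  have hexp : exp a ≤ S := (exp_le_exp.2 ha).trans_eq (exp_log hS)
  rw [div_le_one (by rw [hN]; positivity), hZ, hN]
  nlinarith

lemma finalSize_abs_log_factor_sub_le (hS : 0 < S) (hI : 0 ≤ I) (hR : 0 ≤ R)
    (hε : ε ∈ Set.Ioo 0 1) (hN : N = S + I + R) (hZ : Z = (1 - ε) * N + ε * R) (a b : ℝ)
    (ha : a ≤ log S) (hb : b ≤ log S) :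
    |log ((ε * exp a + Z) / N) - log ((ε * exp b + Z) / N)| ≤ ε * S / Z * |a - b| := by
  have hZ0 := finalSize_Z_pos hS hI hR hε.2 hN hZ
  have hN0 : N ≠ 0 := by rw [hN]; positivity
  have hpos : ∀ t, ε * exp t + Z ≠ 0 := fun t => by have := hε.1; positivity
  rw [log_div (hpos a) hN0, log_div (hpos b) hN0, sub_sub_sub_cancel_right]
  exact abs_log_mul_exp_add_sub_le hε.1.le hZ0 hS ha hb

end FinalSizeFactor

lemma div_mul_mul_div_eq {β γ μ ε S Z : ℝ} (hμ : μ ≠ 0) (hε : ε = μ / (γ + μ)) :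
    β / μ * (ε * S / Z) = β * S / ((γ + μ) * Z) := by
  rw [hε]; field_simp

theorem stmt_16_general
    (β11 β12 β21 β22 γ1 γ2 μ1 μ2 : ℝ)
    (hβ11 : 0 < β11) (hβ12 : 0 < β12) (hβ21 : 0 < β21) (hβ22 : 0 < β22)
    (hγ1 : 0 < γ1) (hγ2 : 0 < γ2) (hμ1 : 0 < μ1) (hμ2 : 0 < μ2)
    (S10 S20 I10 I20 R10 R20 : ℝ)
    (hS10 : 0 < S10) (hS20 : 0 < S20)
    (hI10 : 0 ≤ I10) (hI20 : 0 ≤ I20)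
    (hR10 : 0 ≤ R10) (hR20 : 0 ≤ R20)
    (ε1 ε2 Z1 Z2 N10 N20 : ℝ)
    (hN10 : N10 = S10 + I10 + R10) (hN20 : N20 = S20 + I20 + R20)
    (hε1 : ε1 = μ1 / (γ1 + μ1)) (hε2 : ε2 = μ2 / (γ2 + μ2))
    (hZ1 : Z1 = (1 - ε1) * N10 + ε1 * R10) (hZ2 : Z2 = (1 - ε2) * N20 + ε2 * R20)
    (Λ : ℝ)
    (hΛ : Λ = max (β11 * S10 / ((γ1 + μ1) * Z1) + β12 * S20 / ((γ2 + μ2) * Z2))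
                  (β21 * S10 / ((γ1 + μ1) * Z1) + β22 * S20 / ((γ2 + μ2) * Z2)))
    (T : ℝ × ℝ → ℝ × ℝ)
    (hT : T = Tmap β11 β12 β21 β22 μ1 μ2 S10 S20 ε1 ε2 Z1 Z2 N10 N20)
    :
    (∀ u : ℝ × ℝ, u.1 ≤ Real.log S10 → u.2 ≤ Real.log S20 →
      (Gmap T u).1 ≤ Real.log S10 ∧ (Gmap T u).2 ≤ Real.log S20) ∧
    (∀ u v : ℝ × ℝ, u.1 ≤ Real.log S10 → u.2 ≤ Real.log S20 →
      v.1 ≤ Real.log S10 → v.2 ≤ Real.log S20 →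
      max |(Gmap T u).1 - (Gmap T v).1| |(Gmap T u).2 - (Gmap T v).2|
        ≤ Λ * max |u.1 - v.1| |u.2 - v.2|) := by
  subst hT
  have hε1' : ε1 ∈ Set.Ioo 0 1 := hε1 ▸ div_add_mem_Ioo hγ1 hμ1
  have hε2' : ε2 ∈ Set.Ioo 0 1 := hε2 ▸ div_add_mem_Ioo hγ2 hμ2
  have hφ1 := finalSize_factor_pos hS10 hI10 hR10 hε1' hN10 hZ1
  have hφ2 := finalSize_factor_pos hS20 hI20 hR20 hε2' hN20 hZ2
  have hφ1_le := finalSize_factor_le_one hS10 hI10 hR10 hε1'.1.le hN10 hZ1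
  have hφ2_le := finalSize_factor_le_one hS20 hI20 hR20 hε2'.1.le hN20 hZ2
  have hφ1_lip := finalSize_abs_log_factor_sub_le hS10 hI10 hR10 hε1' hN10 hZ1
  have hφ2_lip := finalSize_abs_log_factor_sub_le hS20 hI20 hR20 hε2' hN20 hZ2
  have hc1 : 0 ≤ ε1 * S10 / Z1 :=
    div_nonneg (mul_pos hε1'.1 hS10).le (finalSize_Z_pos hS10 hI10 hR10 hε1'.2 hN10 hZ1).le
  have hc2 : 0 ≤ ε2 * S20 / Z2 :=
    div_nonneg (mul_pos hε2'.1 hS20).le (finalSize_Z_pos hS20 hI20 hR20 hε2'.2 hN20 hZ2).le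
  refine ⟨fun u hu1 hu2 => ⟨?_, ?_⟩, fun u v hu1 hu2 hv1 hv2 => max_le ?_ ?_⟩
  · exact log_mul_rpow_mul_rpow_le_log hS10 (hφ1 _) (hφ2 _) (hφ1_le _ hu1) (hφ2_le _ hu2)
      (by positivity) (by positivity)
  · exact log_mul_rpow_mul_rpow_le_log hS20 (hφ1 _) (hφ2 _) (hφ1_le _ hu1) (hφ2_le _ hu2)
      (by positivity) (by positivity)
  · calc _ ≤ (β11 / μ1 * (ε1 * S10 / Z1) + β12 / μ2 * (ε2 * S20 / Z2))
          * max |u.1 - v.1| |u.2 - v.2| :=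
          abs_log_mul_rpow_mul_rpow_sub_le hS10 (by positivity) (by positivity) hc1 hc2
            (hφ1 _) (hφ2 _) (hφ1 _) (hφ2 _) (hφ1_lip _ _ hu1 hv1) (hφ2_lip _ _ hu2 hv2)
      _ ≤ Λ * max |u.1 - v.1| |u.2 - v.2| := by
          rw [div_mul_mul_div_eq hμ1.ne' hε1, div_mul_mul_div_eq hμ2.ne' hε2, hΛ]
          gcongr
          exact le_max_left _ _
  · calc _ ≤ (β21 / μ1 * (ε1 * S10 / Z1) + β22 / μ2 * (ε2 * S20 / Z2))
          * max |u.1 - v.1| |u.2 - v.2| :=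
          abs_log_mul_rpow_mul_rpow_sub_le hS20 (by positivity) (by positivity) hc1 hc2
            (hφ1 _) (hφ2 _) (hφ1 _) (hφ2 _) (hφ1_lip _ _ hu1 hv1) (hφ2_lip _ _ hu2 hv2)
      _ ≤ Λ * max |u.1 - v.1| |u.2 - v.2| := by
          rw [div_mul_mul_div_eq hμ1.ne' hε1, div_mul_mul_div_eq hμ2.ne' hε2, hΛ]
          gcongr
          exact le_max_right _ _

theorem stmt_16
    (β11 β12 β21 β22 γ1 γ2 μ1 μ2 : ℝ)
    (hβ11 : 0 < β11) (hβ12 : 0 < β12) (hβ21 : 0 < β21) (hβ22 : 0 < β22)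
    (hγ1 : 0 < γ1) (hγ2 : 0 < γ2) (hμ1 : 0 < μ1) (hμ2 : 0 < μ2)
    (S10 S20 I10 I20 R10 R20 : ℝ)
    (hS10 : 0 < S10) (hS20 : 0 < S20)
    (hI10 : 0 ≤ I10) (hI20 : 0 ≤ I20)
    (hR10 : 0 ≤ R10) (hR20 : 0 ≤ R20)
    (ε1 ε2 Z1 Z2 N10 N20 : ℝ)
    (hN10 : N10 = S10 + I10 + R10) (hN20 : N20 = S20 + I20 + R20)
    (hε1 : ε1 = μ1 / (γ1 + μ1)) (hε2 : ε2 = μ2 / (γ2 + μ2))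
    (hZ1 : Z1 = (1 - ε1) * N10 + ε1 * R10) (hZ2 : Z2 = (1 - ε2) * N20 + ε2 * R20)
    (Λ : ℝ)
    (hΛ : Λ = max (β11 * S10 / ((γ1 + μ1) * Z1) + β12 * S20 / ((γ2 + μ2) * Z2))
                  (β21 * S10 / ((γ1 + μ1) * Z1) + β22 * S20 / ((γ2 + μ2) * Z2)))
    (hΛ1 : Λ < 1)
    (T : ℝ × ℝ → ℝ × ℝ)
    (hT : T = Tmap β11 β12 β21 β22 μ1 μ2 S10 S20 ε1 ε2 Z1 Z2 N10 N20)
    :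
    (∀ u : ℝ × ℝ, u.1 ≤ Real.log S10 → u.2 ≤ Real.log S20 →
      (Gmap T u).1 ≤ Real.log S10 ∧ (Gmap T u).2 ≤ Real.log S20) ∧
    (∀ u v : ℝ × ℝ, u.1 ≤ Real.log S10 → u.2 ≤ Real.log S20 →
      v.1 ≤ Real.log S10 → v.2 ≤ Real.log S20 →
      max |(Gmap T u).1 - (Gmap T v).1| |(Gmap T u).2 - (Gmap T v).2|
        ≤ Λ * max |u.1 - v.1| |u.2 - v.2|) :=
  stmt_16_general β11 β12 β21 β22 γ1 γ2 μ1 μ2 hβ11 hβ12 hβ21 hβ22 hγ1 hγ2 hμ1 hμ2 S10 S20 I10 I20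
    R10 R20 hS10 hS20 hI10 hI20 hR10 hR20 ε1 ε2 Z1 Z2 N10 N20 hN10 hN20 hε1 hε2 hZ1 hZ2 Λ hΛ T hT
end

section
/- Let T be the final-size map built from positive parameters βᵢⱼ, γᵢ, μᵢ and initial data S₁₀, S₂₀ > 0, I₁₀, I₂₀ ≥ 0, R₁₀, R₂₀ ≥ 0 with I₁₀ + I₂₀ > 0, and assume hypothesis H2d: max over i ∈ {1,2} of (βᵢ₁ S₁₀/((γ₁+μ₁)Z₁) + βᵢ₂ S₂₀/((γ₂+μ₂)Z₂)) < 1. Then T has exactly one fixed point S* in (0,S₁₀]×(0,S₂₀], this fixed point satisfies 0 < Sᵢ* < Sᵢ₀ for i = 1,2, and S* = lim_{n→∞} Tⁿ(0,0). -/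
open Filter

/-!
Write `Sᵢ = Sᵢ₀ yᵢ`. In the variables `y ∈ [0,1]²` the map `T` becomes
`yᵢ ↦ (c₁ y₁ + d₁) ^ (βᵢ₁/μ₁) (c₂ y₂ + d₂) ^ (βᵢ₂/μ₂)` with `cⱼ = εⱼ Sⱼ₀ / Nⱼ(0)`,
`dⱼ = Zⱼ / Nⱼ(0)`, where `cⱼ + dⱼ = 1 - εⱼ Iⱼ₀ / Nⱼ(0) ≤ 1`. It maps the unit square into
itself, and since `t ↦ t ^ p` is `p / d`-Lipschitz on `[d, 1]`, it is Lipschitz for the sup distance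
with constant `maxᵢ ∑ⱼ (βᵢⱼ/μⱼ) cⱼ / dⱼ`, which is exactly the quantity of (H2d). The Banach fixed
point theorem gives the unique fixed point and the convergence of the iterates from `0`;
`I₁₀ + I₂₀ > 0` makes one of the bases `< 1` and so keeps the fixed point off the upper edges.
-/

open Set Function Topology

theorem Real.abs_rpow_sub_rpow_le {m p u v : ℝ} (hm : 0 < m) (hp : 0 ≤ p)
    (hu : u ∈ Icc m 1) (hv : v ∈ Icc m 1) : |u ^ p - v ^ p| ≤ p / m * |u - v| := by
  have hderiv : ∀ t ∈ Icc m 1, HasDerivWithinAt (· ^ p) (p * t ^ (p - 1)) (Icc m 1) t :=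
    fun t ht => (Real.hasDerivAt_rpow_const (Or.inl (hm.trans_le ht.1).ne')).hasDerivWithinAt
  have hbound : ∀ t ∈ Icc m 1, ‖p * t ^ (p - 1)‖ ≤ p / m := by
    intro t ⟨hmt, ht1⟩
    have ht : 0 < t := hm.trans_le hmt
    rw [Real.norm_eq_abs, abs_of_nonneg (by positivity), Real.rpow_sub_one ht.ne',
      div_eq_mul_one_div p m]
    exact mul_le_mul_of_nonneg_left
      (div_le_div₀ zero_le_one (Real.rpow_le_one ht.le ht1 hp) hm hmt) hp
  simpa [Real.norm_eq_abs] using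
    (convex_Icc m 1).norm_image_sub_le_of_norm_hasDerivWithin_le hderiv hbound hv hu

theorem abs_mul_sub_mul_le_of_abs_le_one {a b a' b' : ℝ} (hb : |b| ≤ 1) (ha' : |a'| ≤ 1) :
    |a * b - a' * b'| ≤ |a - a'| + |b - b'| :=
  calc |a * b - a' * b'| = |(a - a') * b + a' * (b - b')| := by ring_nf
    _ ≤ |a - a'| * |b| + |a'| * |b - b'| := by
      simpa only [abs_mul] using abs_add_le ((a - a') * b) (a' * (b - b'))
    _ ≤ |a - a'| + |b - b'| := by
      gcongr
      · exact mul_le_of_le_one_right (abs_nonneg _) hb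
      · exact mul_le_of_le_one_left (abs_nonneg _) ha'

theorem exists_isFixedPt_tendsto_iterate_of_dist_le_mul {α : Type*} [MetricSpace α]
    {f : α → α} {s : Set α} {K : ℝ} (hs : IsComplete s) (hfs : MapsTo f s s) (hK : K < 1)
    (hf : ∀ x ∈ s, ∀ y ∈ s, dist (f x) (f y) ≤ K * dist x y) {x : α} (hx : x ∈ s) :
    ∃ y ∈ s, IsFixedPt f y ∧ Tendsto (fun n => f^[n] x) atTop (𝓝 y) ∧
      ∀ z ∈ s, IsFixedPt f z → z = y := by
  have hcontr : ContractingWith K.toNNReal (hfs.restrict f s s) :=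
    ⟨Real.toNNReal_lt_one.2 hK, (LipschitzOnWith.of_dist_le_mul fun x hx y hy =>
      (hf x hx y hy).trans (by gcongr; exact Real.le_coe_toNNReal K)).mapsToRestrict hfs⟩
  obtain ⟨y, hys, hy, htends, -⟩ := hcontr.exists_fixedPoint' hs hfs hx (edist_ne_top _ _)
  refine ⟨y, hys, hy, htends, fun z hzs hz => ?_⟩
  exact congrArg Subtype.val <|
    hcontr.fixedPoint_unique' (x := ⟨z, hzs⟩) (y := ⟨y, hys⟩) (Subtype.ext hz) (Subtype.ext hy)

theorem Function.Semiconj.isFixedPt_of_map {α β : Type*} {fa : α → α} {fb : β → β} {g : α → β}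
    (h : Semiconj g fa fb) (hg : Injective g) {x : α} (hx : IsFixedPt fb (g x)) :
    IsFixedPt fa x :=
  hg ((h x).trans hx)

section AffineFactor

variable {c d p t t' : ℝ}

theorem affine_mem_Icc (hc : 0 ≤ c) (hcd : c + d ≤ 1) (ht : t ∈ Icc (0 : ℝ) 1) :
    c * t + d ∈ Icc d 1 :=
  ⟨by nlinarith [ht.1], by nlinarith [ht.2]⟩

theorem affine_rpow_mem_Ioc (hc : 0 ≤ c) (hd : 0 < d) (hcd : c + d ≤ 1) (hp : 0 ≤ p)
    (ht : t ∈ Icc (0 : ℝ) 1) : (c * t + d) ^ p ∈ Ioc 0 1 :=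
  have h := affine_mem_Icc hc hcd ht
  ⟨Real.rpow_pos_of_pos (hd.trans_le h.1) p, Real.rpow_le_one (hd.le.trans h.1) h.2 hp⟩

theorem affine_rpow_lt_one (hc : 0 ≤ c) (hd : 0 < d) (hcd : c + d < 1) (hp : 0 < p)
    (ht : t ∈ Icc (0 : ℝ) 1) : (c * t + d) ^ p < 1 :=
  Real.rpow_lt_one (by nlinarith [ht.1]) (by nlinarith [ht.2]) hp

theorem abs_affine_rpow_sub_le (hc : 0 ≤ c) (hd : 0 < d) (hcd : c + d ≤ 1) (hp : 0 ≤ p)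
    (ht : t ∈ Icc (0 : ℝ) 1) (ht' : t' ∈ Icc (0 : ℝ) 1) :
    |(c * t + d) ^ p - (c * t' + d) ^ p| ≤ p * c / d * |t - t'| :=
  calc |(c * t + d) ^ p - (c * t' + d) ^ p| ≤ p / d * |c * t + d - (c * t' + d)| :=
        Real.abs_rpow_sub_rpow_le hd hp (affine_mem_Icc hc hcd ht) (affine_mem_Icc hc hcd ht')
    _ = p * c / d * |t - t'| := by
        rw [show c * t + d - (c * t' + d) = c * (t - t') by ring, abs_mul, abs_of_nonneg hc]
        ring

end AffineFactor

noncomputable def affinePowProd (c₁ d₁ c₂ d₂ p q : ℝ) (y : ℝ × ℝ) : ℝ :=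
  (c₁ * y.1 + d₁) ^ p * (c₂ * y.2 + d₂) ^ q

section AffinePowProd

variable {c₁ d₁ c₂ d₂ p q : ℝ} {y y' : ℝ × ℝ}

theorem affinePowProd_mem_Ioc (hc₁ : 0 ≤ c₁) (hd₁ : 0 < d₁) (hcd₁ : c₁ + d₁ ≤ 1)
    (hc₂ : 0 ≤ c₂) (hd₂ : 0 < d₂) (hcd₂ : c₂ + d₂ ≤ 1) (hp : 0 ≤ p) (hq : 0 ≤ q)
    (hy : y ∈ Icc (0 : ℝ) 1 ×ˢ Icc (0 : ℝ) 1) : affinePowProd c₁ d₁ c₂ d₂ p q y ∈ Ioc 0 1 :=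
  have h₁ := affine_rpow_mem_Ioc hc₁ hd₁ hcd₁ hp hy.1
  have h₂ := affine_rpow_mem_Ioc hc₂ hd₂ hcd₂ hq hy.2
  ⟨mul_pos h₁.1 h₂.1, mul_le_one₀ h₁.2 h₂.1.le h₂.2⟩

theorem affinePowProd_lt_one (hc₁ : 0 ≤ c₁) (hd₁ : 0 < d₁) (hcd₁ : c₁ + d₁ ≤ 1)
    (hc₂ : 0 ≤ c₂) (hd₂ : 0 < d₂) (hcd₂ : c₂ + d₂ ≤ 1) (hp : 0 < p) (hq : 0 < q)
    (hcd : c₁ + d₁ < 1 ∨ c₂ + d₂ < 1) (hy : y ∈ Icc (0 : ℝ) 1 ×ˢ Icc (0 : ℝ) 1) :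
    affinePowProd c₁ d₁ c₂ d₂ p q y < 1 := by
  have h₁ := affine_rpow_mem_Ioc hc₁ hd₁ hcd₁ hp.le hy.1
  have h₂ := affine_rpow_mem_Ioc hc₂ hd₂ hcd₂ hq.le hy.2
  rcases hcd with hcd₁ | hcd₂
  · exact mul_lt_one_of_nonneg_of_lt_one_left h₁.1.le
      (affine_rpow_lt_one hc₁ hd₁ hcd₁ hp hy.1) h₂.2
  · exact mul_lt_one_of_nonneg_of_lt_one_right h₁.2 h₂.1.le
      (affine_rpow_lt_one hc₂ hd₂ hcd₂ hq hy.2)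

theorem dist_affinePowProd_le (hc₁ : 0 ≤ c₁) (hd₁ : 0 < d₁) (hcd₁ : c₁ + d₁ ≤ 1)
    (hc₂ : 0 ≤ c₂) (hd₂ : 0 < d₂) (hcd₂ : c₂ + d₂ ≤ 1) (hp : 0 ≤ p) (hq : 0 ≤ q)
    (hy : y ∈ Icc (0 : ℝ) 1 ×ˢ Icc (0 : ℝ) 1) (hy' : y' ∈ Icc (0 : ℝ) 1 ×ˢ Icc (0 : ℝ) 1) :
    dist (affinePowProd c₁ d₁ c₂ d₂ p q y) (affinePowProd c₁ d₁ c₂ d₂ p q y') ≤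
      (p * c₁ / d₁ + q * c₂ / d₂) * dist y y' := by
  have h₂ := (affine_rpow_mem_Ioc hc₂ hd₂ hcd₂ hq hy.2)
  have h₁' := (affine_rpow_mem_Ioc hc₁ hd₁ hcd₁ hp hy'.1)
  have hdist₁ : |y.1 - y'.1| ≤ dist y y' := by
    rw [Prod.dist_eq, ← Real.dist_eq]; exact le_max_left _ _
  have hdist₂ : |y.2 - y'.2| ≤ dist y y' := by
    rw [Prod.dist_eq, ← Real.dist_eq]; exact le_max_right _ _
  rw [Real.dist_eq, affinePowProd, affinePowProd, add_mul]
  refine (abs_mul_sub_mul_le_of_abs_le_one ?_ ?_).trans (add_le_add ?_ ?_)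
  · exact (abs_of_pos h₂.1).trans_le h₂.2
  · exact (abs_of_pos h₁'.1).trans_le h₁'.2
  · exact (abs_affine_rpow_sub_le hc₁ hd₁ hcd₁ hp hy.1 hy'.1).trans (by gcongr)
  · exact (abs_affine_rpow_sub_le hc₂ hd₂ hcd₂ hq hy.2 hy'.2).trans (by gcongr)

end AffinePowProd

noncomputable def normalizedTmap (c₁ d₁ c₂ d₂ p₁₁ p₁₂ p₂₁ p₂₂ : ℝ) (y : ℝ × ℝ) : ℝ × ℝ :=
  (affinePowProd c₁ d₁ c₂ d₂ p₁₁ p₁₂ y, affinePowProd c₁ d₁ c₂ d₂ p₂₁ p₂₂ y)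

theorem normalizedTmap_exists_isFixedPt {c₁ d₁ c₂ d₂ p₁₁ p₁₂ p₂₁ p₂₂ : ℝ}
    (hc₁ : 0 ≤ c₁) (hd₁ : 0 < d₁) (hcd₁ : c₁ + d₁ ≤ 1)
    (hc₂ : 0 ≤ c₂) (hd₂ : 0 < d₂) (hcd₂ : c₂ + d₂ ≤ 1)
    (hp₁₁ : 0 < p₁₁) (hp₁₂ : 0 < p₁₂) (hp₂₁ : 0 < p₂₁) (hp₂₂ : 0 < p₂₂)
    (hcd : c₁ + d₁ < 1 ∨ c₂ + d₂ < 1)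
    (hΛ : max (p₁₁ * c₁ / d₁ + p₁₂ * c₂ / d₂) (p₂₁ * c₁ / d₁ + p₂₂ * c₂ / d₂) < 1) :
    ∃ y, IsFixedPt (normalizedTmap c₁ d₁ c₂ d₂ p₁₁ p₁₂ p₂₁ p₂₂) y ∧
      (0 < y.1 ∧ y.1 < 1) ∧ (0 < y.2 ∧ y.2 < 1) ∧
      Tendsto (fun n => (normalizedTmap c₁ d₁ c₂ d₂ p₁₁ p₁₂ p₂₁ p₂₂)^[n] 0) atTop (𝓝 y) ∧
      ∀ z ∈ Icc (0 : ℝ) 1 ×ˢ Icc (0 : ℝ) 1,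
        IsFixedPt (normalizedTmap c₁ d₁ c₂ d₂ p₁₁ p₁₂ p₂₁ p₂₂) z → z = y := by
  set U := normalizedTmap c₁ d₁ c₂ d₂ p₁₁ p₁₂ p₂₁ p₂₂
  have hmaps : MapsTo U (Icc 0 1 ×ˢ Icc 0 1) (Icc 0 1 ×ˢ Icc 0 1) := fun y hy =>
    ⟨Ioc_subset_Icc_self
      (affinePowProd_mem_Ioc hc₁ hd₁ hcd₁ hc₂ hd₂ hcd₂ hp₁₁.le hp₁₂.le hy),
     Ioc_subset_Icc_self
      (affinePowProd_mem_Ioc hc₁ hd₁ hcd₁ hc₂ hd₂ hcd₂ hp₂₁.le hp₂₂.le hy)⟩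
  have hlip : ∀ y ∈ Icc (0 : ℝ) 1 ×ˢ Icc (0 : ℝ) 1, ∀ y' ∈ Icc (0 : ℝ) 1 ×ˢ Icc (0 : ℝ) 1,
      dist (U y) (U y') ≤ max (p₁₁ * c₁ / d₁ + p₁₂ * c₂ / d₂) (p₂₁ * c₁ / d₁ + p₂₂ * c₂ / d₂) *
        dist y y' := fun y hy y' hy' => by
    rw [Prod.dist_eq]
    refine max_le ?_ ?_
    · exact (dist_affinePowProd_le hc₁ hd₁ hcd₁ hc₂ hd₂ hcd₂ hp₁₁.le hp₁₂.le hy hy').trans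
        (by gcongr; exact le_max_left _ _)
    · exact (dist_affinePowProd_le hc₁ hd₁ hcd₁ hc₂ hd₂ hcd₂ hp₂₁.le hp₂₂.le hy hy').trans
        (by gcongr; exact le_max_right _ _)
  have h0 : (0 : ℝ × ℝ) ∈ Icc (0 : ℝ) 1 ×ˢ Icc (0 : ℝ) 1 :=
    ⟨left_mem_Icc.2 zero_le_one, left_mem_Icc.2 zero_le_one⟩
  obtain ⟨y, hy, hfix, htends, huniq⟩ := exists_isFixedPt_tendsto_iterate_of_dist_le_mul
    (isClosed_Icc.prod isClosed_Icc).isComplete hmaps hΛ hlip h0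
  refine ⟨y, hfix, ?_, ?_, htends, huniq⟩ <;> rw [← hfix]
  · exact ⟨(affinePowProd_mem_Ioc hc₁ hd₁ hcd₁ hc₂ hd₂ hcd₂ hp₁₁.le hp₁₂.le hy).1,
      affinePowProd_lt_one hc₁ hd₁ hcd₁ hc₂ hd₂ hcd₂ hp₁₁ hp₁₂ hcd hy⟩
  · exact ⟨(affinePowProd_mem_Ioc hc₁ hd₁ hcd₁ hc₂ hd₂ hcd₂ hp₂₁.le hp₂₂.le hy).1,
      affinePowProd_lt_one hc₁ hd₁ hcd₁ hc₂ hd₂ hcd₂ hp₂₁ hp₂₂ hcd hy⟩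

theorem semiconj_Tmap (β11 β12 β21 β22 μ1 μ2 S10 S20 ε1 ε2 Z1 Z2 N10 N20 : ℝ) :
    Semiconj (fun y => (S10, S20) * y)
      (normalizedTmap (ε1 * S10 / N10) (Z1 / N10) (ε2 * S20 / N20) (Z2 / N20)
        (β11 / μ1) (β12 / μ2) (β21 / μ1) (β22 / μ2))
      (Tmap β11 β12 β21 β22 μ1 μ2 S10 S20 ε1 ε2 Z1 Z2 N10 N20) := fun y => by
  have hbase : ∀ ε S Z N t : ℝ, ε * S / N * t + Z / N = (ε * (S * t) + Z) / N := by
    intros; ring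
  simp only [Tmap, normalizedTmap, affinePowProd, Prod.fst_mul, Prod.snd_mul, Prod.mk_mul_mk,
    hbase, mul_assoc]

theorem exists_isFixedPt_of_semiconj_mul {T U : ℝ × ℝ → ℝ × ℝ} {a b : ℝ} (ha : 0 < a) (hb : 0 < b)
    (h : Semiconj (fun y => (a, b) * y) U T) {y : ℝ × ℝ} (hfix : IsFixedPt U y)
    (hy₁ : 0 < y.1 ∧ y.1 < 1) (hy₂ : 0 < y.2 ∧ y.2 < 1)
    (htends : Tendsto (fun n => U^[n] 0) atTop (𝓝 y))
    (huniq : ∀ z ∈ Icc (0 : ℝ) 1 ×ˢ Icc (0 : ℝ) 1, IsFixedPt U z → z = y) :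
    ∃ Sstar : ℝ × ℝ,
      (T Sstar = Sstar ∧ (0 < Sstar.1 ∧ Sstar.1 < a) ∧ (0 < Sstar.2 ∧ Sstar.2 < b) ∧
        Tendsto (fun n => T^[n] (0, 0)) atTop (𝓝 Sstar)) ∧
      ∀ Y : ℝ × ℝ, Y.1 ∈ Ioc 0 a → Y.2 ∈ Ioc 0 b → T Y = Y → Y = Sstar := by
  refine ⟨(a, b) * y, ⟨hfix.map h, ⟨mul_pos ha hy₁.1, mul_lt_of_lt_one_right ha hy₁.2⟩,
    ⟨mul_pos hb hy₂.1, mul_lt_of_lt_one_right hb hy₂.2⟩, ?_⟩, fun Y hY₁ hY₂ hTY => ?_⟩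
  · refine (((continuous_const.mul continuous_id).tendsto y).comp htends).congr fun n => ?_
    exact (h.iterate_right n 0).trans (by rw [mul_zero]; rfl)
  · have hinj : Injective fun y : ℝ × ℝ => (a, b) * y :=
      Prod.isLeftRegular_mk.2
        ⟨(IsRegular.of_ne_zero ha.ne').left, (IsRegular.of_ne_zero hb.ne').left⟩
    have hY : (a, b) * (Y.1 / a, Y.2 / b) = Y :=
      Prod.ext (mul_div_cancel₀ _ ha.ne') (mul_div_cancel₀ _ hb.ne')
    have hsquare : (Y.1 / a, Y.2 / b) ∈ Icc (0 : ℝ) 1 ×ˢ Icc (0 : ℝ) 1 :=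
      ⟨⟨(div_pos hY₁.1 ha).le, div_le_one_of_le₀ hY₁.2 ha.le⟩,
        ⟨(div_pos hY₂.1 hb).le, div_le_one_of_le₀ hY₂.2 hb.le⟩⟩
    rw [← hY] at hTY ⊢
    rw [huniq _ hsquare (h.isFixedPt_of_map hinj hTY)]

theorem finalSize_coeff_bounds {γ μ S I R ε N Z : ℝ} (hγ : 0 < γ) (hμ : 0 < μ) (hS : 0 < S)
    (hI : 0 ≤ I) (hR : 0 ≤ R) (hN : N = S + I + R) (hε : ε = μ / (γ + μ))
    (hZ : Z = (1 - ε) * N + ε * R) :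
    0 ≤ ε * S / N ∧ 0 < Z / N ∧ ε * S / N + Z / N ≤ 1 ∧ (0 < I → ε * S / N + Z / N < 1) := by
  have hN0 : 0 < N := by linarith
  have hε0 : 0 < ε := by rw [hε]; positivity
  have hε1 : ε < 1 := by rw [hε, div_lt_one (by positivity)]; linarith
  have hsum : ε * S / N + Z / N = 1 - ε * I / N := by
    field_simp
    rw [hZ, hN]; ring
  refine ⟨by positivity, div_pos ?_ hN0, ?_, fun hI0 => ?_⟩
  · rw [hZ]; nlinarith
  · rw [hsum]; linarith [show 0 ≤ ε * I / N by positivity]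
  · rw [hsum]; linarith [show 0 < ε * I / N by positivity]

theorem finalSize_contractionCoeff_eq {β γ μ S ε N Z : ℝ} (hγ : 0 < γ) (hμ : 0 < μ) (hN : 0 < N)
    (hε : ε = μ / (γ + μ)) : β / μ * (ε * S / N) / (Z / N) = β * S / ((γ + μ) * Z) := by
  rw [hε]; field_simp

theorem stmt_17
    (β11 β12 β21 β22 γ1 γ2 μ1 μ2 : ℝ)
    (hβ11 : 0 < β11) (hβ12 : 0 < β12) (hβ21 : 0 < β21) (hβ22 : 0 < β22)
    (hγ1 : 0 < γ1) (hγ2 : 0 < γ2) (hμ1 : 0 < μ1) (hμ2 : 0 < μ2)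
    (S10 S20 I10 I20 R10 R20 : ℝ)
    (hS10 : 0 < S10) (hS20 : 0 < S20)
    (hI10 : 0 ≤ I10) (hI20 : 0 ≤ I20)
    (hR10 : 0 ≤ R10) (hR20 : 0 ≤ R20)
    (ε1 ε2 Z1 Z2 N10 N20 : ℝ)
    (hN10 : N10 = S10 + I10 + R10) (hN20 : N20 = S20 + I20 + R20)
    (hε1 : ε1 = μ1 / (γ1 + μ1)) (hε2 : ε2 = μ2 / (γ2 + μ2))
    (hZ1 : Z1 = (1 - ε1) * N10 + ε1 * R10) (hZ2 : Z2 = (1 - ε2) * N20 + ε2 * R20)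
    (hI0 : 0 < I10 + I20)
    (Λ : ℝ)
    (hΛ : Λ = max (β11 * S10 / ((γ1 + μ1) * Z1) + β12 * S20 / ((γ2 + μ2) * Z2))
                  (β21 * S10 / ((γ1 + μ1) * Z1) + β22 * S20 / ((γ2 + μ2) * Z2)))
    (hΛ1 : Λ < 1)
    (T : ℝ × ℝ → ℝ × ℝ)
    (hT : T = Tmap β11 β12 β21 β22 μ1 μ2 S10 S20 ε1 ε2 Z1 Z2 N10 N20)
    :
    ∃ Sstar : ℝ × ℝ,
      (T Sstar = Sstar ∧
       (0 < Sstar.1 ∧ Sstar.1 < S10) ∧ (0 < Sstar.2 ∧ Sstar.2 < S20) ∧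
       Tendsto (fun n => T^[n] (0, 0)) atTop (nhds Sstar)) ∧
      ∀ Y : ℝ × ℝ, Y.1 ∈ Set.Ioc (0:ℝ) S10 → Y.2 ∈ Set.Ioc (0:ℝ) S20 → T Y = Y → Y = Sstar := by
  subst hT hΛ
  obtain ⟨hc₁, hd₁, hcd₁, hlt₁⟩ := finalSize_coeff_bounds hγ1 hμ1 hS10 hI10 hR10 hN10 hε1 hZ1
  obtain ⟨hc₂, hd₂, hcd₂, hlt₂⟩ := finalSize_coeff_bounds hγ2 hμ2 hS20 hI20 hR20 hN20 hε2 hZ2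
  have hcd : ε1 * S10 / N10 + Z1 / N10 < 1 ∨ ε2 * S20 / N20 + Z2 / N20 < 1 := by
    rcases hI10.lt_or_eq with hI | hI
    exacts [.inl (hlt₁ hI), .inr (hlt₂ (by linarith))]
  have hN1 : 0 < N10 := by linarith
  have hN2 : 0 < N20 := by linarith
  rw [← finalSize_contractionCoeff_eq (β := β11) (S := S10) (Z := Z1) hγ1 hμ1 hN1 hε1,
    ← finalSize_contractionCoeff_eq (β := β12) (S := S20) (Z := Z2) hγ2 hμ2 hN2 hε2,
    ← finalSize_contractionCoeff_eq (β := β21) (S := S10) (Z := Z1) hγ1 hμ1 hN1 hε1,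
    ← finalSize_contractionCoeff_eq (β := β22) (S := S20) (Z := Z2) hγ2 hμ2 hN2 hε2] at hΛ1
  obtain ⟨y, hfix, hy₁, hy₂, htends, huniq⟩ := normalizedTmap_exists_isFixedPt
    hc₁ hd₁ hcd₁ hc₂ hd₂ hcd₂ (by positivity) (by positivity) (by positivity) (by positivity)
    hcd hΛ1
  exact exists_isFixedPt_of_semiconj_mul hS10 hS20
    (semiconj_Tmap β11 β12 β21 β22 μ1 μ2 S10 S20 ε1 ε2 Z1 Z2 N10 N20) hfix hy₁ hy₂ htends huniq
end

section
/- Let T be the final-size map built from positive parameters βᵢⱼ, γᵢ, μᵢ and initial data S₁₀, S₂₀ > 0, I₁₀, I₂₀ ≥ 0, R₁₀, R₂₀ ≥ 0, assume hypothesis H2d with Λ := max over i ∈ {1,2} of (βᵢ₁ S₁₀/((γ₁+μ₁)Z₁) + βᵢ₂ S₂₀/((γ₂+μ₂)Z₂)) < 1, and let S^∞ = (S₁^∞,S₂^∞) be the unique fixed point of T in (0,S₁₀]×(0,S₂₀]. Define the iterates X₀ = (0,0), Xₙ₊₁ = T(Xₙ), and for n ≥ 1 set Uₙ = (log xₙ,₁,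 log xₙ,₂) and U^∞ = (log S₁^∞, log S₂^∞). Then for all n ≥ 1, with δₙ := Λ^{n−1} · max_j |u₁,ⱼ − u^∞ⱼ|: (a) max_j |uₙ,ⱼ − u^∞ⱼ| ≤ δₙ, and (b) |xₙ,ᵢ − Sᵢ^∞| ≤ (e^{δₙ} − 1) · xₙ,ᵢ for i = 1,2. -/
open Real Set Function

theorem Function.IsFixedPt.iterate_le_pow_mul {α : Type*} {f : α → α} {s : Set α}
    (d : α → α → ℝ) {Λ : ℝ} (hΛ : 0 ≤ Λ) (hfs : MapsTo f s s)
    (hf : ∀ p ∈ s, ∀ q ∈ s, d (f p) (f q) ≤ Λ * d p q)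
    {x : α} (hx : IsFixedPt f x) (hxs : x ∈ s) {p : α} (hp : p ∈ s) (n : ℕ) :
    d (f^[n] p) x ≤ Λ ^ n * d p x := by
  induction n with
  | zero => simp
  | succ n ih =>
    calc d (f^[n + 1] p) x = d (f (f^[n] p)) (f x) := by rw [iterate_succ_apply', hx.eq]
      _ ≤ Λ * d (f^[n] p) x := hf _ (hfs.iterate n hp) _ hxs
      _ ≤ Λ * (Λ ^ n * d p x) := mul_le_mul_of_nonneg_left ih hΛ
      _ = Λ ^ (n + 1) * d p x := by ring

theorem log_add_sub_log_add_le {ε Z S x y : ℝ} (hε : 0 ≤ ε) (hZ : 0 < Z) (hy : 0 < y)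
    (hyx : y ≤ x) (hxS : x ≤ S) :
    log (ε * x + Z) - log (ε * y + Z) ≤ ε * S / Z * (log x - log y) := by
  have hx : 0 < x := hy.trans_le hyx
  have hlog : 0 ≤ log x - log y := sub_nonneg.2 (log_le_log hy hyx)
  have hsub : x - y ≤ S * (log x - log y) :=
    calc x - y = x * (1 - (x / y)⁻¹) := by field_simp
      _ ≤ x * log (x / y) := by gcongr; exact one_sub_inv_le_log_of_pos (div_pos hx hy)
      _ ≤ S * (log x - log y) := by rw [log_div hx.ne' hy.ne']; gcongr
  calc log (ε * x + Z) - log (ε * y + Z) = log ((ε * x + Z) / (ε * y + Z)) := by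
        rw [log_div (by positivity) (by positivity)]
    _ ≤ (ε * x + Z) / (ε * y + Z) - 1 := log_le_sub_one_of_pos (by positivity)
    _ = ε * (x - y) / (ε * y + Z) := by field_simp; ring
    _ ≤ ε * (x - y) / Z :=
        div_le_div_of_nonneg_left (mul_nonneg hε (sub_nonneg.2 hyx)) hZ
          (le_add_of_nonneg_left (by positivity))
    _ ≤ ε * (S * (log x - log y)) / Z := by gcongr
    _ = ε * S / Z * (log x - log y) := by ring

theorem abs_log_add_sub_log_add_le {ε Z S x y : ℝ} (hε : 0 ≤ ε) (hZ : 0 < Z)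
    (hx : x ∈ Ioc 0 S) (hy : y ∈ Ioc 0 S) :
    |log (ε * x + Z) - log (ε * y + Z)| ≤ ε * S / Z * |log x - log y| := by
  wlog hyx : y ≤ x generalizing x y
  · rw [abs_sub_comm, abs_sub_comm (log x)]
    exact this hy hx (le_of_not_ge hyx)
  have hmono : log (ε * y + Z) ≤ log (ε * x + Z) :=
    log_le_log (by nlinarith [hy.1]) (by nlinarith)
  rw [abs_of_nonneg (sub_nonneg.2 hmono), abs_of_nonneg (sub_nonneg.2 (log_le_log hy.1 hyx))]
  exact log_add_sub_log_add_le hε hZ hy.1 hyx hx.2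

theorem abs_log_add_div_sub_log_add_div_le {ε Z N S x y : ℝ} (hε : 0 ≤ ε) (hZ : 0 < Z)
    (hN : 0 < N) (hx : x ∈ Ioc 0 S) (hy : y ∈ Ioc 0 S) :
    |log ((ε * x + Z) / N) - log ((ε * y + Z) / N)| ≤ ε * S / Z * |log x - log y| := by
  rw [log_div (by nlinarith [hx.1]) hN.ne', log_div (by nlinarith [hy.1]) hN.ne',
    sub_sub_sub_cancel_right]
  exact abs_log_add_sub_log_add_le hε hZ hx hy

theorem add_div_mem_Ioc_zero_one {ε Z N S x : ℝ} (hε : 0 ≤ ε) (hZ : 0 < Z)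
    (hN : ε * S + Z ≤ N) (hx : x ∈ Icc 0 S) : (ε * x + Z) / N ∈ Ioc 0 1 := by
  have hxZ : 0 < ε * x + Z := by nlinarith [hx.1]
  have hxN : ε * x + Z ≤ N := by nlinarith [hx.2]
  exact ⟨div_pos hxZ (hxZ.trans_le hxN), div_le_one_of_le₀ hxN (by linarith)⟩

theorem mul_rpow_mul_rpow_mem_Ioc {S a b u v : ℝ} (hS : 0 < S) (ha : 0 ≤ a) (hb : 0 ≤ b)
    (hu : u ∈ Ioc 0 1) (hv : v ∈ Ioc 0 1) : S * u ^ a * v ^ b ∈ Ioc 0 S := by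
  have hua : u ^ a ≤ 1 := rpow_le_one hu.1.le hu.2 ha
  have hvb : v ^ b ≤ 1 := rpow_le_one hv.1.le hv.2 hb
  have hpos : 0 < S * u ^ a := mul_pos hS (rpow_pos_of_pos hu.1 a)
  refine ⟨mul_pos hpos (rpow_pos_of_pos hv.1 b), ?_⟩
  calc S * u ^ a * v ^ b ≤ S * u ^ a := mul_le_of_le_one_right hpos.le hvb
    _ ≤ S := mul_le_of_le_one_right hS.le hua

theorem abs_log_mul_rpow_mul_rpow_sub_le_s18 {S a b u v u' v' : ℝ} (hS : 0 < S) (ha : 0 ≤ a)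
    (hb : 0 ≤ b) (hu : 0 < u) (hv : 0 < v) (hu' : 0 < u') (hv' : 0 < v') :
    |log (S * u ^ a * v ^ b) - log (S * u' ^ a * v' ^ b)|
      ≤ a * |log u - log u'| + b * |log v - log v'| := by
  have hlog : ∀ {u v : ℝ}, 0 < u → 0 < v →
      log (S * u ^ a * v ^ b) = log S + a * log u + b * log v := fun hu hv => by
    rw [log_mul (by positivity) (rpow_pos_of_pos hv b).ne',
      log_mul hS.ne' (rpow_pos_of_pos hu a).ne', log_rpow hu, log_rpow hv]
  calc |log (S * u ^ a * v ^ b) - log (S * u' ^ a * v' ^ b)|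
      = |a * (log u - log u') + b * (log v - log v')| := by
        rw [hlog hu hv, hlog hu' hv']; ring_nf
    _ ≤ a * |log u - log u'| + b * |log v - log v'| := by
        refine (abs_add_le _ _).trans_eq ?_
        rw [abs_mul, abs_mul, abs_of_nonneg ha, abs_of_nonneg hb]

theorem abs_sub_le_exp_sub_one_mul_of_abs_log_sub_le {x s δ : ℝ} (hx : 0 < x) (hs : 0 < s)
    (h : |log x - log s| ≤ δ) : |x - s| ≤ (exp δ - 1) * x := by
  have hδ : 1 ≤ exp δ := one_le_exp ((abs_nonneg _).trans h)
  obtain ⟨hsx, hxs⟩ := abs_le.1 h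
  have hx_le : x ≤ s * exp δ := by
    calc x = exp (log x) := (exp_log hx).symm
      _ ≤ exp (log s + δ) := exp_le_exp.2 (by linarith)
      _ = s * exp δ := by rw [exp_add, exp_log hs]
  have hs_le : s ≤ x * exp δ := by
    calc s = exp (log s) := (exp_log hs).symm
      _ ≤ exp (log x + δ) := exp_le_exp.2 (by linarith)
      _ = x * exp δ := by rw [exp_add, exp_log hx]
  rw [abs_le]
  rcases le_total s x with h | h <;> constructor <;> nlinarith

theorem eps_pos_and_Z_pos_and_eps_mul_add_Z_le {μ γ S I R ε Z N : ℝ} (hμ : 0 < μ) (hγ : 0 < γ)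
    (hS : 0 < S) (hI : 0 ≤ I) (hR : 0 ≤ R) (hN : N = S + I + R) (hε : ε = μ / (γ + μ))
    (hZ : Z = (1 - ε) * N + ε * R) : 0 < ε ∧ 0 < Z ∧ ε * S + Z ≤ N := by
  have hε0 : 0 < ε := hε ▸ by positivity
  have hε1 : ε < 1 := by rw [hε, div_lt_one (by positivity)]; linarith
  subst hN hZ
  exact ⟨hε0, by nlinarith, by nlinarith⟩

noncomputable def logSupDist (p q : ℝ × ℝ) : ℝ :=
  max |log p.1 - log q.1| |log p.2 - log q.2|

theorem abs_log_Tmap_coord_sub_le {S a b ε1 Z1 N1 S1 ε2 Z2 N2 S2 : ℝ} {p q : ℝ × ℝ}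
    (hS : 0 < S) (ha : 0 ≤ a) (hb : 0 ≤ b)
    (hε1 : 0 ≤ ε1) (hZ1 : 0 < Z1) (hN1 : ε1 * S1 + Z1 ≤ N1)
    (hε2 : 0 ≤ ε2) (hZ2 : 0 < Z2) (hN2 : ε2 * S2 + Z2 ≤ N2)
    (hp : p ∈ Ioc 0 S1 ×ˢ Ioc 0 S2) (hq : q ∈ Ioc 0 S1 ×ˢ Ioc 0 S2) :
    |log (S * ((ε1 * p.1 + Z1) / N1) ^ a * ((ε2 * p.2 + Z2) / N2) ^ b)
        - log (S * ((ε1 * q.1 + Z1) / N1) ^ a * ((ε2 * q.2 + Z2) / N2) ^ b)|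
      ≤ (a * (ε1 * S1 / Z1) + b * (ε2 * S2 / Z2)) * logSupDist p q := by
  have base_pos : ∀ {ε Z N S x : ℝ}, 0 ≤ ε → 0 < Z → ε * S + Z ≤ N → x ∈ Ioc 0 S →
      0 < (ε * x + Z) / N :=
    fun hε hZ hN hx => (add_div_mem_Ioc_zero_one hε hZ hN (Ioc_subset_Icc_self hx)).1
  have hN1' : 0 < N1 := by nlinarith [hp.1.1, hp.1.2]
  have hN2' : 0 < N2 := by nlinarith [hp.2.1, hp.2.2]
  calc _ ≤ a * |log ((ε1 * p.1 + Z1) / N1) - log ((ε1 * q.1 + Z1) / N1)|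
          + b * |log ((ε2 * p.2 + Z2) / N2) - log ((ε2 * q.2 + Z2) / N2)| :=
        abs_log_mul_rpow_mul_rpow_sub_le_s18 hS ha hb (base_pos hε1 hZ1 hN1 hp.1)
          (base_pos hε2 hZ2 hN2 hp.2) (base_pos hε1 hZ1 hN1 hq.1) (base_pos hε2 hZ2 hN2 hq.2)
    _ ≤ a * (ε1 * S1 / Z1 * logSupDist p q) + b * (ε2 * S2 / Z2 * logSupDist p q) := by
        have hS1 : 0 ≤ S1 := hp.1.1.le.trans hp.1.2
        have hS2 : 0 ≤ S2 := hp.2.1.le.trans hp.2.2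
        gcongr
        · exact (abs_log_add_div_sub_log_add_div_le hε1 hZ1 hN1' hp.1 hq.1).trans
            (by gcongr; exact le_max_left _ _)
        · exact (abs_log_add_div_sub_log_add_div_le hε2 hZ2 hN2' hp.2 hq.2).trans
            (by gcongr; exact le_max_right _ _)
    _ = (a * (ε1 * S1 / Z1) + b * (ε2 * S2 / Z2)) * logSupDist p q := by ring

section Tmap

variable {β11 β12 β21 β22 μ1 μ2 S10 S20 ε1 ε2 Z1 Z2 N10 N20 : ℝ}

theorem mapsTo_Tmap (h11 : 0 ≤ β11 / μ1) (h12 : 0 ≤ β12 / μ2) (h21 : 0 ≤ β21 / μ1)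
    (h22 : 0 ≤ β22 / μ2) (hS10 : 0 < S10) (hS20 : 0 < S20)
    (hε1 : 0 ≤ ε1) (hZ1 : 0 < Z1) (hN1 : ε1 * S10 + Z1 ≤ N10)
    (hε2 : 0 ≤ ε2) (hZ2 : 0 < Z2) (hN2 : ε2 * S20 + Z2 ≤ N20) :
    MapsTo (Tmap β11 β12 β21 β22 μ1 μ2 S10 S20 ε1 ε2 Z1 Z2 N10 N20)
      (Icc 0 S10 ×ˢ Icc 0 S20) (Ioc 0 S10 ×ˢ Ioc 0 S20) := by
  rintro p ⟨hp1, hp2⟩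
  have hu := add_div_mem_Ioc_zero_one hε1 hZ1 hN1 hp1
  have hv := add_div_mem_Ioc_zero_one hε2 hZ2 hN2 hp2
  exact ⟨mul_rpow_mul_rpow_mem_Ioc hS10 h11 h12 hu hv, mul_rpow_mul_rpow_mem_Ioc hS20 h21 h22 hu hv⟩

theorem logSupDist_Tmap_le (h11 : 0 ≤ β11 / μ1) (h12 : 0 ≤ β12 / μ2) (h21 : 0 ≤ β21 / μ1)
    (h22 : 0 ≤ β22 / μ2) (hS10 : 0 < S10) (hS20 : 0 < S20)
    (hε1 : 0 ≤ ε1) (hZ1 : 0 < Z1) (hN1 : ε1 * S10 + Z1 ≤ N10)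
    (hε2 : 0 ≤ ε2) (hZ2 : 0 < Z2) (hN2 : ε2 * S20 + Z2 ≤ N20)
    {p q : ℝ × ℝ} (hp : p ∈ Ioc 0 S10 ×ˢ Ioc 0 S20) (hq : q ∈ Ioc 0 S10 ×ˢ Ioc 0 S20) :
    logSupDist (Tmap β11 β12 β21 β22 μ1 μ2 S10 S20 ε1 ε2 Z1 Z2 N10 N20 p)
        (Tmap β11 β12 β21 β22 μ1 μ2 S10 S20 ε1 ε2 Z1 Z2 N10 N20 q)
      ≤ max (β11 / μ1 * (ε1 * S10 / Z1) + β12 / μ2 * (ε2 * S20 / Z2))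
          (β21 / μ1 * (ε1 * S10 / Z1) + β22 / μ2 * (ε2 * S20 / Z2)) * logSupDist p q := by
  have hd : 0 ≤ logSupDist p q := (abs_nonneg _).trans (le_max_left _ _)
  exact max_le
    ((abs_log_Tmap_coord_sub_le hS10 h11 h12 hε1 hZ1 hN1 hε2 hZ2 hN2 hp hq).trans
      (mul_le_mul_of_nonneg_right (le_max_left _ _) hd))
    ((abs_log_Tmap_coord_sub_le hS20 h21 h22 hε1 hZ1 hN1 hε2 hZ2 hN2 hp hq).trans
      (mul_le_mul_of_nonneg_right (le_max_right _ _) hd))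

end Tmap

theorem stmt_18_general
    (β11 β12 β21 β22 γ1 γ2 μ1 μ2 : ℝ)
    (hβ11 : 0 < β11) (hβ12 : 0 < β12) (hβ21 : 0 < β21) (hβ22 : 0 < β22)
    (hγ1 : 0 < γ1) (hγ2 : 0 < γ2) (hμ1 : 0 < μ1) (hμ2 : 0 < μ2)
    (S10 S20 I10 I20 R10 R20 : ℝ)
    (hS10 : 0 < S10) (hS20 : 0 < S20)
    (hI10 : 0 ≤ I10) (hI20 : 0 ≤ I20)
    (hR10 : 0 ≤ R10) (hR20 : 0 ≤ R20)
    (ε1 ε2 Z1 Z2 N10 N20 : ℝ)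
    (hN10 : N10 = S10 + I10 + R10) (hN20 : N20 = S20 + I20 + R20)
    (hε1 : ε1 = μ1 / (γ1 + μ1)) (hε2 : ε2 = μ2 / (γ2 + μ2))
    (hZ1 : Z1 = (1 - ε1) * N10 + ε1 * R10) (hZ2 : Z2 = (1 - ε2) * N20 + ε2 * R20)
    (Λ : ℝ)
    (hΛ : Λ = max (β11 * S10 / ((γ1 + μ1) * Z1) + β12 * S20 / ((γ2 + μ2) * Z2))
                  (β21 * S10 / ((γ1 + μ1) * Z1) + β22 * S20 / ((γ2 + μ2) * Z2)))
    (T : ℝ × ℝ → ℝ × ℝ)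
    (hT : T = Tmap β11 β12 β21 β22 μ1 μ2 S10 S20 ε1 ε2 Z1 Z2 N10 N20)
    (Sinf : ℝ × ℝ)
    (hfix : T Sinf = Sinf)
    (hbox : Sinf.1 ∈ Set.Ioc (0:ℝ) S10 ∧ Sinf.2 ∈ Set.Ioc (0:ℝ) S20) :
    ∀ n : ℕ, 1 ≤ n → ∀ δn : ℝ,
      δn = Λ ^ (n - 1) *
        max |Real.log (T^[1] (0, 0)).1 - Real.log Sinf.1|
            |Real.log (T^[1] (0, 0)).2 - Real.log Sinf.2| →
      (max |Real.log (T^[n] (0, 0)).1 - Real.log Sinf.1|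
           |Real.log (T^[n] (0, 0)).2 - Real.log Sinf.2| ≤ δn) ∧
      |(T^[n] (0, 0)).1 - Sinf.1| ≤ (Real.exp δn - 1) * (T^[n] (0, 0)).1 ∧
      |(T^[n] (0, 0)).2 - Sinf.2| ≤ (Real.exp δn - 1) * (T^[n] (0, 0)).2 := by
  rintro n hn δn hδn
  obtain ⟨hε1_pos, hZ1_pos, hN1⟩ :=
    eps_pos_and_Z_pos_and_eps_mul_add_Z_le hμ1 hγ1 hS10 hI10 hR10 hN10 hε1 hZ1
  obtain ⟨hε2_pos, hZ2_pos, hN2⟩ :=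
    eps_pos_and_Z_pos_and_eps_mul_add_Z_le hμ2 hγ2 hS20 hI20 hR20 hN20 hε2 hZ2
  have hcoef1 : ∀ β S, β / μ1 * (ε1 * S / Z1) = β * S / ((γ1 + μ1) * Z1) := fun β S => by
    rw [hε1]; field_simp
  have hcoef2 : ∀ β S, β / μ2 * (ε2 * S / Z2) = β * S / ((γ2 + μ2) * Z2) := fun β S => by
    rw [hε2]; field_simp
  have hΛ0 : 0 ≤ Λ := hΛ ▸ le_max_of_le_left (by positivity)
  simp only [← hcoef1, ← hcoef2] at hΛ
  obtain ⟨h11, h12, h21, h22⟩ :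
      0 ≤ β11 / μ1 ∧ 0 ≤ β12 / μ2 ∧ 0 ≤ β21 / μ1 ∧ 0 ≤ β22 / μ2 := by
    refine ⟨?_, ?_, ?_, ?_⟩ <;> positivity
  have hmaps : MapsTo T (Icc 0 S10 ×ˢ Icc 0 S20) (Ioc 0 S10 ×ˢ Ioc 0 S20) := hT ▸
    mapsTo_Tmap h11 h12 h21 h22 hS10 hS20 hε1_pos.le hZ1_pos hN1 hε2_pos.le hZ2_pos hN2
  have hinv := hmaps.mono_left (prod_mono Ioc_subset_Icc_self Ioc_subset_Icc_self)
  have hcontr : ∀ p ∈ Ioc 0 S10 ×ˢ Ioc 0 S20, ∀ q ∈ Ioc 0 S10 ×ˢ Ioc 0 S20,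
      logSupDist (T p) (T q) ≤ Λ * logSupDist p q := fun p hp q hq => hΛ ▸ hT ▸
    logSupDist_Tmap_le h11 h12 h21 h22 hS10 hS20 hε1_pos.le hZ1_pos hN1 hε2_pos.le hZ2_pos hN2
      hp hq
  have hX1 : T^[1] (0, 0) ∈ Ioc 0 S10 ×ˢ Ioc 0 S20 :=
    hmaps ⟨left_mem_Icc.2 hS10.le, left_mem_Icc.2 hS20.le⟩
  obtain ⟨m, rfl⟩ : ∃ m, n = m + 1 := ⟨n - 1, by omega⟩
  rw [Nat.add_sub_cancel] at hδn
  rw [iterate_add_apply]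
  have hdist : logSupDist (T^[m] (T^[1] (0, 0))) Sinf ≤ δn :=
    hδn ▸ IsFixedPt.iterate_le_pow_mul logSupDist hΛ0 hinv hcontr hfix hbox hX1 m
  obtain ⟨hXm1, hXm2⟩ := hinv.iterate m hX1
  exact ⟨hdist,
    abs_sub_le_exp_sub_one_mul_of_abs_log_sub_le hXm1.1 hbox.1.1 ((le_max_left _ _).trans hdist),
    abs_sub_le_exp_sub_one_mul_of_abs_log_sub_le hXm2.1 hbox.2.1 ((le_max_right _ _).trans hdist)⟩

theorem stmt_18
    (β11 β12 β21 β22 γ1 γ2 μ1 μ2 : ℝ)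
    (hβ11 : 0 < β11) (hβ12 : 0 < β12) (hβ21 : 0 < β21) (hβ22 : 0 < β22)
    (hγ1 : 0 < γ1) (hγ2 : 0 < γ2) (hμ1 : 0 < μ1) (hμ2 : 0 < μ2)
    (S10 S20 I10 I20 R10 R20 : ℝ)
    (hS10 : 0 < S10) (hS20 : 0 < S20)
    (hI10 : 0 ≤ I10) (hI20 : 0 ≤ I20)
    (hR10 : 0 ≤ R10) (hR20 : 0 ≤ R20)
    (ε1 ε2 Z1 Z2 N10 N20 : ℝ)
    (hN10 : N10 = S10 + I10 + R10) (hN20 : N20 = S20 + I20 + R20)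
    (hε1 : ε1 = μ1 / (γ1 + μ1)) (hε2 : ε2 = μ2 / (γ2 + μ2))
    (hZ1 : Z1 = (1 - ε1) * N10 + ε1 * R10) (hZ2 : Z2 = (1 - ε2) * N20 + ε2 * R20)
    (Λ : ℝ)
    (hΛ : Λ = max (β11 * S10 / ((γ1 + μ1) * Z1) + β12 * S20 / ((γ2 + μ2) * Z2))
                  (β21 * S10 / ((γ1 + μ1) * Z1) + β22 * S20 / ((γ2 + μ2) * Z2)))
    (hΛ1 : Λ < 1)
    (T : ℝ × ℝ → ℝ × ℝ)
    (hT : T = Tmap β11 β12 β21 β22 μ1 μ2 S10 S20 ε1 ε2 Z1 Z2 N10 N20)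
    (Sinf : ℝ × ℝ)
    (hfix : T Sinf = Sinf)
    (hbox : Sinf.1 ∈ Set.Ioc (0:ℝ) S10 ∧ Sinf.2 ∈ Set.Ioc (0:ℝ) S20)
    (huniq : ∀ Y : ℝ × ℝ, Y.1 ∈ Set.Ioc (0:ℝ) S10 → Y.2 ∈ Set.Ioc (0:ℝ) S20 → T Y = Y → Y = Sinf) :
    ∀ n : ℕ, 1 ≤ n → ∀ δn : ℝ,
      δn = Λ ^ (n - 1) *
        max |Real.log (T^[1] (0, 0)).1 - Real.log Sinf.1|
            |Real.log (T^[1] (0, 0)).2 - Real.log Sinf.2| →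
      (max |Real.log (T^[n] (0, 0)).1 - Real.log Sinf.1|
           |Real.log (T^[n] (0, 0)).2 - Real.log Sinf.2| ≤ δn) ∧
      |(T^[n] (0, 0)).1 - Sinf.1| ≤ (Real.exp δn - 1) * (T^[n] (0, 0)).1 ∧
      |(T^[n] (0, 0)).2 - Sinf.2| ≤ (Real.exp δn - 1) * (T^[n] (0, 0)).2 :=
  stmt_18_general β11 β12 β21 β22 γ1 γ2 μ1 μ2 hβ11 hβ12 hβ21 hβ22 hγ1 hγ2 hμ1 hμ2 S10 S20 I10 I20
    R10 R20 hS10 hS20 hI10 hI20 hR10 hR20 ε1 ε2 Z1 Z2 N10 N20 hN10 hN20 hε1 hε2 hZ1 hZ2 Λ hΛ T hT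
    Sinf hfix hbox
end

section
/- Fix positive γ₁, γ₂, μ₁, μ₂ and initial data S₁₀, S₂₀ > 0, I₁₀, I₂₀ ≥ 0, R₁₀, R₂₀ ≥ 0, and let β = (βᵢⱼ) and β̃ = (β̃ᵢⱼ) be two sets of positive transmission parameters with β̃ᵢⱼ ≥ βᵢⱼ for all i,j ∈ {1,2}. Let T^β and T^β̃ be the corresponding final-size maps. Then: (a) for every X = (x₁,x₂) with 0 ≤ xⱼ ≤ Sⱼ₀ one has Tᵢ^β̃(X) ≤ Tᵢ^β(X) for i = 1,2; and (b) the limits S^∞(β) = lim_{n→∞} (T^β)ⁿ(0,0) and S^∞(β̃) = lim_{n→∞} (T^β̃)ⁿ(0,0) exist and satisfy S^∞(β̃) ≤ S^∞(β) componentwise. In particular, increasing any transmission coefficient can only decrease the final number of susceptibles in each group. -/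
/-!
On the box `[0, S₁₀] × [0, S₂₀]` both final-size maps are monotone self-maps, because the bases
`(εⱼ xⱼ + Zⱼ) / Nⱼ(0)` are increasing in `xⱼ` and lie in `(0, 1]` there. Hence the orbits of
`(0, 0)` increase inside the box and converge. On bases in `(0, 1]` a larger exponent gives a
smaller power, so `T^β̃ ≤ T^β` on the box, and by monotonicity this comparison propagates along
the orbits and passes to the limits.
-/

open Filter

open Set Topology

section Iteration

variable {α : Type*} [Preorder α]

theorem monotone_iterate_of_mapsTo_Icc {T : α → α} {a b : α}
    (hmaps : MapsTo T (Icc a b) (Icc a b)) (hmono : MonotoneOn T (Icc a b)) (hab : a ≤ b) :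
    Monotone fun n => T^[n] a := by
  have ha : a ∈ Icc a b := left_mem_Icc.2 hab
  refine monotone_nat_of_le_succ fun n => ?_
  induction n with
  | zero => exact (hmaps ha).1
  | succ n ih =>
    rw [Function.iterate_succ_apply' T n, Function.iterate_succ_apply' T (n + 1)]
    exact hmono (hmaps.iterate n ha) (hmaps.iterate (n + 1) ha) ih

theorem iterate_le_iterate_of_le_of_monotoneOn {S T : α → α} {s : Set α}
    (hS : MapsTo S s s) (hT : MapsTo T s s) (hTmono : MonotoneOn T s)
    (hST : ∀ x ∈ s, S x ≤ T x) {x : α} (hx : x ∈ s) (n : ℕ) : S^[n] x ≤ T^[n] x := by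
  induction n with
  | zero => exact le_rfl
  | succ n ih =>
    rw [Function.iterate_succ_apply' S, Function.iterate_succ_apply' T]
    exact (hST _ (hS.iterate n hx)).trans (hTmono (hS.iterate n hx) (hT.iterate n hx) ih)

end Iteration

theorem Monotone.tendsto_prod_ciSup {α β : Type*}
    [ConditionallyCompleteLattice α] [TopologicalSpace α] [SupConvergenceClass α]
    [ConditionallyCompleteLattice β] [TopologicalSpace β] [SupConvergenceClass β]
    {u : ℕ → α × β} (hu : Monotone u) (hbdd : BddAbove (range u)) :
    Tendsto u atTop (𝓝 (⨆ n, (u n).1, ⨆ n, (u n).2)) := by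
  have h₁ := monotone_fst.map_bddAbove hbdd
  have h₂ := monotone_snd.map_bddAbove hbdd
  rw [← range_comp] at h₁ h₂
  exact (tendsto_atTop_ciSup (monotone_fst.comp hu) h₁).prodMk_nhds
    (tendsto_atTop_ciSup (monotone_snd.comp hu) h₂)

theorem exists_tendsto_iterate_of_mapsTo_Icc {α β : Type*}
    [ConditionallyCompleteLattice α] [TopologicalSpace α] [SupConvergenceClass α]
    [ConditionallyCompleteLattice β] [TopologicalSpace β] [SupConvergenceClass β]
    {T : α × β → α × β} {a b : α × β}
    (hmaps : MapsTo T (Icc a b) (Icc a b)) (hmono : MonotoneOn T (Icc a b)) (hab : a ≤ b) :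
    ∃ L, Tendsto (fun n => T^[n] a) atTop (𝓝 L) :=
  ⟨_, (monotone_iterate_of_mapsTo_Icc hmaps hmono hab).tendsto_prod_ciSup
    ⟨b, forall_mem_range.2 fun n => (hmaps.iterate n (left_mem_Icc.2 hab)).2⟩⟩

section PowerProduct

variable {S p p' q q' e e' f f' : ℝ}

theorem mul_rpow_mul_rpow_le_of_le (hS : 0 ≤ S) (hp : 0 ≤ p) (hpp' : p ≤ p') (hq : 0 ≤ q)
    (hqq' : q ≤ q') (he : 0 ≤ e) (hf : 0 ≤ f) :
    S * p ^ e * q ^ f ≤ S * p' ^ e * q' ^ f := by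
  have hp'e := Real.rpow_nonneg (hp.trans hpp') e
  gcongr

theorem mul_rpow_mul_rpow_le_self (hS : 0 ≤ S) (hp : p ∈ Icc 0 1) (hq : q ∈ Icc 0 1)
    (he : 0 ≤ e) (hf : 0 ≤ f) : S * p ^ e * q ^ f ≤ S :=
  calc S * p ^ e * q ^ f ≤ S * 1 ^ e * 1 ^ f :=
        mul_rpow_mul_rpow_le_of_le hS hp.1 hp.2 hq.1 hq.2 he hf
    _ = S := by simp

theorem mul_rpow_mul_rpow_le_of_exponent_le (hS : 0 ≤ S) (hp : p ∈ Ioc 0 1) (hq : q ∈ Ioc 0 1)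
    (hee' : e ≤ e') (hff' : f ≤ f') : S * p ^ e' * q ^ f' ≤ S * p ^ e * q ^ f := by
  have hpe := Real.rpow_le_rpow_of_exponent_ge hp.1 hp.2 hee'
  have hqf := Real.rpow_le_rpow_of_exponent_ge hq.1 hq.2 hff'
  have hp₀ := hp.1
  have hq₀ := hq.1
  exact mul_le_mul (mul_le_mul_of_nonneg_left hpe hS) hqf (by positivity) (by positivity)

end PowerProduct

theorem div_mem_Ioc_of_affine {ε Z N S x : ℝ} (hε : 0 ≤ ε) (hZ : 0 < Z) (hZN : ε * S + Z ≤ N)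
    (hx : x ∈ Icc 0 S) : (ε * x + Z) / N ∈ Ioc 0 1 := by
  have hεx : ε * x ≤ ε * S := mul_le_mul_of_nonneg_left hx.2 hε
  have hN : 0 < N := by nlinarith [mul_nonneg hε hx.1]
  exact ⟨div_pos (by nlinarith [mul_nonneg hε hx.1]) hN, (div_le_one hN).2 (by linarith)⟩

theorem sir_coefficients_bounds {γ μ S I R ε Z N : ℝ} (hγ : 0 < γ) (hμ : 0 < μ) (hS : 0 < S)
    (hI : 0 ≤ I) (hR : 0 ≤ R) (hN : N = S + I + R) (hε : ε = μ / (γ + μ))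
    (hZ : Z = (1 - ε) * N + ε * R) : 0 ≤ ε ∧ 0 < Z ∧ ε * S + Z ≤ N := by
  have hε₀ : 0 ≤ ε := hε ▸ by positivity
  have hε₁ : ε < 1 := hε ▸ (div_lt_one (by positivity)).2 (by linarith)
  subst hN hZ
  refine ⟨hε₀, by nlinarith [mul_nonneg hε₀ hR], by nlinarith [mul_nonneg hε₀ hI]⟩

section Tmap

variable {β11 β12 β21 β22 βt11 βt12 βt21 βt22 μ1 μ2 S10 S20 ε1 ε2 Z1 Z2 N10 N20 : ℝ}

theorem Tmap_mapsTo_Icc (hμ1 : 0 < μ1) (hμ2 : 0 < μ2) (hβ11 : 0 ≤ β11) (hβ12 : 0 ≤ β12)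
    (hβ21 : 0 ≤ β21) (hβ22 : 0 ≤ β22) (hε1 : 0 ≤ ε1) (hZ1 : 0 < Z1) (hZN1 : ε1 * S10 + Z1 ≤ N10)
    (hε2 : 0 ≤ ε2) (hZ2 : 0 < Z2) (hZN2 : ε2 * S20 + Z2 ≤ N20) :
    MapsTo (Tmap β11 β12 β21 β22 μ1 μ2 S10 S20 ε1 ε2 Z1 Z2 N10 N20)
      (Icc 0 (S10, S20)) (Icc 0 (S10, S20)) := by
  rintro ⟨x1, x2⟩ ⟨⟨hx1, hx2⟩, hxS1, hxS2⟩
  have hp := div_mem_Ioc_of_affine hε1 hZ1 hZN1 ⟨hx1, hxS1⟩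
  have hq := div_mem_Ioc_of_affine hε2 hZ2 hZN2 ⟨hx2, hxS2⟩
  have hS1 : 0 ≤ S10 := hx1.trans hxS1
  have hS2 : 0 ≤ S20 := hx2.trans hxS2
  have hp₀ := hp.1
  have hq₀ := hq.1
  refine ⟨⟨?_, ?_⟩, ?_, ?_⟩ <;> simp only [Tmap]
  · positivity
  · positivity
  · exact mul_rpow_mul_rpow_le_self hS1 (Ioc_subset_Icc_self hp) (Ioc_subset_Icc_self hq)
      (by positivity) (by positivity)
  · exact mul_rpow_mul_rpow_le_self hS2 (Ioc_subset_Icc_self hp) (Ioc_subset_Icc_self hq)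
      (by positivity) (by positivity)

theorem Tmap_monotoneOn (hμ1 : 0 < μ1) (hμ2 : 0 < μ2) (hβ11 : 0 ≤ β11) (hβ12 : 0 ≤ β12)
    (hβ21 : 0 ≤ β21) (hβ22 : 0 ≤ β22) (hε1 : 0 ≤ ε1) (hZ1 : 0 < Z1) (hZN1 : ε1 * S10 + Z1 ≤ N10)
    (hε2 : 0 ≤ ε2) (hZ2 : 0 < Z2) (hZN2 : ε2 * S20 + Z2 ≤ N20) :
    MonotoneOn (Tmap β11 β12 β21 β22 μ1 μ2 S10 S20 ε1 ε2 Z1 Z2 N10 N20) (Icc 0 (S10, S20)) := by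
  rintro ⟨x1, x2⟩ ⟨⟨hx1, hx2⟩, hxS1, hxS2⟩ ⟨y1, y2⟩ - ⟨hxy1, hxy2⟩
  have hp := div_mem_Ioc_of_affine hε1 hZ1 hZN1 ⟨hx1, hxS1⟩
  have hq := div_mem_Ioc_of_affine hε2 hZ2 hZN2 ⟨hx2, hxS2⟩
  have hN10 : 0 ≤ N10 := by nlinarith [mul_nonneg hε1 (hx1.trans hxS1)]
  have hN20 : 0 ≤ N20 := by nlinarith [mul_nonneg hε2 (hx2.trans hxS2)]
  have hpp' : (ε1 * x1 + Z1) / N10 ≤ (ε1 * y1 + Z1) / N10 := by dsimp at hxy1; gcongr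
  have hqq' : (ε2 * x2 + Z2) / N20 ≤ (ε2 * y2 + Z2) / N20 := by dsimp at hxy2; gcongr
  constructor
  · exact mul_rpow_mul_rpow_le_of_le (hx1.trans hxS1) hp.1.le hpp' hq.1.le hqq'
      (by positivity) (by positivity)
  · exact mul_rpow_mul_rpow_le_of_le (hx2.trans hxS2) hp.1.le hpp' hq.1.le hqq'
      (by positivity) (by positivity)

theorem Tmap_le_Tmap_of_le (hμ1 : 0 < μ1) (hμ2 : 0 < μ2) (hle11 : β11 ≤ βt11)
    (hle12 : β12 ≤ βt12) (hle21 : β21 ≤ βt21) (hle22 : β22 ≤ βt22) (hε1 : 0 ≤ ε1) (hZ1 : 0 < Z1)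
    (hZN1 : ε1 * S10 + Z1 ≤ N10) (hε2 : 0 ≤ ε2) (hZ2 : 0 < Z2) (hZN2 : ε2 * S20 + Z2 ≤ N20)
    {X : ℝ × ℝ} (hX : X ∈ Icc 0 (S10, S20)) :
    Tmap βt11 βt12 βt21 βt22 μ1 μ2 S10 S20 ε1 ε2 Z1 Z2 N10 N20 X ≤
      Tmap β11 β12 β21 β22 μ1 μ2 S10 S20 ε1 ε2 Z1 Z2 N10 N20 X := by
  obtain ⟨⟨hx1, hx2⟩, hxS1, hxS2⟩ := hX
  have hp := div_mem_Ioc_of_affine hε1 hZ1 hZN1 ⟨hx1, hxS1⟩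
  have hq := div_mem_Ioc_of_affine hε2 hZ2 hZN2 ⟨hx2, hxS2⟩
  constructor
  · exact mul_rpow_mul_rpow_le_of_exponent_le (hx1.trans hxS1) hp hq
      (div_le_div_of_nonneg_right hle11 hμ1.le) (div_le_div_of_nonneg_right hle12 hμ2.le)
  · exact mul_rpow_mul_rpow_le_of_exponent_le (hx2.trans hxS2) hp hq
      (div_le_div_of_nonneg_right hle21 hμ1.le) (div_le_div_of_nonneg_right hle22 hμ2.le)

end Tmap

theorem stmt_19
    (γ1 γ2 μ1 μ2 : ℝ)
    (hγ1 : 0 < γ1) (hγ2 : 0 < γ2) (hμ1 : 0 < μ1) (hμ2 : 0 < μ2)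
    (β11 β12 β21 β22 βt11 βt12 βt21 βt22 : ℝ)
    (hβ11 : 0 < β11) (hβ12 : 0 < β12) (hβ21 : 0 < β21) (hβ22 : 0 < β22)
    (hβt11 : 0 < βt11) (hβt12 : 0 < βt12) (hβt21 : 0 < βt21) (hβt22 : 0 < βt22)
    (hle11 : β11 ≤ βt11) (hle12 : β12 ≤ βt12) (hle21 : β21 ≤ βt21) (hle22 : β22 ≤ βt22)
    (S10 S20 I10 I20 R10 R20 : ℝ)
    (hS10 : 0 < S10) (hS20 : 0 < S20)
    (hI10 : 0 ≤ I10) (hI20 : 0 ≤ I20)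
    (hR10 : 0 ≤ R10) (hR20 : 0 ≤ R20)
    (ε1 ε2 Z1 Z2 N10 N20 : ℝ)
    (hN10 : N10 = S10 + I10 + R10) (hN20 : N20 = S20 + I20 + R20)
    (hε1 : ε1 = μ1 / (γ1 + μ1)) (hε2 : ε2 = μ2 / (γ2 + μ2))
    (hZ1 : Z1 = (1 - ε1) * N10 + ε1 * R10) (hZ2 : Z2 = (1 - ε2) * N20 + ε2 * R20)
    (T Tt : ℝ × ℝ → ℝ × ℝ)
    (hT : T = Tmap β11 β12 β21 β22 μ1 μ2 S10 S20 ε1 ε2 Z1 Z2 N10 N20)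
    (hTt : Tt = Tmap βt11 βt12 βt21 βt22 μ1 μ2 S10 S20 ε1 ε2 Z1 Z2 N10 N20) :
    (∀ x1 x2 : ℝ, 0 ≤ x1 → x1 ≤ S10 → 0 ≤ x2 → x2 ≤ S20 →
      (Tt (x1, x2)).1 ≤ (T (x1, x2)).1 ∧ (Tt (x1, x2)).2 ≤ (T (x1, x2)).2) ∧
    ∃ Sb St : ℝ × ℝ,
      Tendsto (fun n => T^[n] (0, 0)) atTop (nhds Sb) ∧
      Tendsto (fun n => Tt^[n] (0, 0)) atTop (nhds St) ∧
      St.1 ≤ Sb.1 ∧ St.2 ≤ Sb.2 := by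
  obtain ⟨hε1, hZ1, hZN1⟩ := sir_coefficients_bounds hγ1 hμ1 hS10 hI10 hR10 hN10 hε1 hZ1
  obtain ⟨hε2, hZ2, hZN2⟩ := sir_coefficients_bounds hγ2 hμ2 hS20 hI20 hR20 hN20 hε2 hZ2
  have hbox : (0 : ℝ × ℝ) ≤ (S10, S20) := ⟨hS10.le, hS20.le⟩
  have hTmaps : MapsTo T (Icc 0 (S10, S20)) (Icc 0 (S10, S20)) := hT ▸ Tmap_mapsTo_Icc
    hμ1 hμ2 hβ11.le hβ12.le hβ21.le hβ22.le hε1 hZ1 hZN1 hε2 hZ2 hZN2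
  have hTtmaps : MapsTo Tt (Icc 0 (S10, S20)) (Icc 0 (S10, S20)) := hTt ▸ Tmap_mapsTo_Icc
    hμ1 hμ2 hβt11.le hβt12.le hβt21.le hβt22.le hε1 hZ1 hZN1 hε2 hZ2 hZN2
  have hTmono : MonotoneOn T (Icc 0 (S10, S20)) := hT ▸ Tmap_monotoneOn
    hμ1 hμ2 hβ11.le hβ12.le hβ21.le hβ22.le hε1 hZ1 hZN1 hε2 hZ2 hZN2
  have hTtmono : MonotoneOn Tt (Icc 0 (S10, S20)) := hTt ▸ Tmap_monotoneOn
    hμ1 hμ2 hβt11.le hβt12.le hβt21.le hβt22.le hε1 hZ1 hZN1 hε2 hZ2 hZN2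
  have hTtT : ∀ X ∈ Icc 0 (S10, S20), Tt X ≤ T X := fun X hX => hT ▸ hTt ▸
    Tmap_le_Tmap_of_le hμ1 hμ2 hle11 hle12 hle21 hle22 hε1 hZ1 hZN1 hε2 hZ2 hZN2 hX
  obtain ⟨Sb, hSb⟩ := exists_tendsto_iterate_of_mapsTo_Icc hTmaps hTmono hbox
  obtain ⟨St, hSt⟩ := exists_tendsto_iterate_of_mapsTo_Icc hTtmaps hTtmono hbox
  have hStSb : St ≤ Sb := le_of_tendsto_of_tendsto' hSt hSb
    (iterate_le_iterate_of_le_of_monotoneOn hTtmaps hTmaps hTmono hTtT (left_mem_Icc.2 hbox))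
  exact ⟨fun x1 x2 h1 h1' h2 h2' => hTtT (x1, x2) ⟨⟨h1, h2⟩, h1', h2'⟩,
    Sb, St, hSb, hSt, hStSb.1, hStSb.2⟩
end
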